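/- arXiv:2405.12686 — 11 statements merged into one kernel-verified Lean document; each statement's English description precedes it below -/
import Mathlib

section
/- Let λ₁⁻, …, λ_m⁻ < 0 and λ₁⁺, …, λ_n⁺ > 0 be real numbers, and let A₁⁻, …, A_m⁻, A₁⁺, …, A_n⁺ be nonnegative real numbers with ∑_{i=1}^m A_i⁻ + ∑_{j=1}^n A_j⁺ = 1 and λ := ∑_{i=1}^m A_i⁻ λ_i⁻ + ∑_{j=1}^n A_j⁺ λ_j⁺ < 0. Then there exist real numbers a_{ij} ∈ [0,1] and b_{ij} ≥ 0 (1 ≤ i ≤ m, 1 ≤ j ≤ n) such that: (1) (1 − a_{ij}) λ_i⁻ + a_{ij} λ_j⁺ < 0 for all i, j; (2) ∑_{i=1}^m ∑_{j=1}^n b_{ij} = 1; (3) A_i⁻ = ∑_{j=1}^n b_{ij}(1 − a_{ij}) for every 1 ≤ i ≤ m, and A_j⁺ = ∑_{i=1}^m b_{ij} a_{ij} for every 1 ≤ j ≤ n. Consequently ∑_{i,j} b_{ij} ((1 − a_{ij}) λ_i⁻ + a_{ij} λ_j⁺) = λ. -/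
/-- **Proposition A.1 (convex sums).** Given negative numbers `λᵢ⁻`, positive numbers `λⱼ⁺`
and nonnegative weights `Aᵢ⁻`, `Aⱼ⁺` summing to `1` whose weighted average
`λ = ∑ Aᵢ⁻ λᵢ⁻ + ∑ Aⱼ⁺ λⱼ⁺` is negative, there are coefficients `a_{ij} ∈ [0,1]` and
`b_{ij} ≥ 0` such that each pairwise average `(1 - a_{ij}) λᵢ⁻ + a_{ij} λⱼ⁺` is negative,
`∑ b_{ij} = 1`, the marginals of `b_{ij}(1-a_{ij})` and `b_{ij} a_{ij}` recover the `Aᵢ⁻`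
and `Aⱼ⁺`, and consequently the total average is again `λ`. -/
theorem convex_sums_decomposition
    (m n : ℕ) (hm : 0 < m) (hn : 0 < n)
    (lamM : Fin m → ℝ) (lamP : Fin n → ℝ)
    (hlamM : ∀ i, lamM i < 0) (hlamP : ∀ j, 0 < lamP j)
    (AM : Fin m → ℝ) (AP : Fin n → ℝ)
    (hAM : ∀ i, 0 ≤ AM i) (hAP : ∀ j, 0 ≤ AP j)
    (hsum : ∑ i, AM i + ∑ j, AP j = 1)
    (hneg : ∑ i, AM i * lamM i + ∑ j, AP j * lamP j < 0) :
    ∃ a b : Fin m → Fin n → ℝ,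
      (∀ i j, a i j ∈ Set.Icc (0 : ℝ) 1) ∧
      (∀ i j, 0 ≤ b i j) ∧
      (∀ i j, (1 - a i j) * lamM i + a i j * lamP j < 0) ∧
      (∑ i, ∑ j, b i j = 1) ∧
      (∀ i, AM i = ∑ j, b i j * (1 - a i j)) ∧
      (∀ j, AP j = ∑ i, b i j * a i j) ∧
      (∑ i, ∑ j, b i j * ((1 - a i j) * lamM i + a i j * lamP j)
        = ∑ i, AM i * lamM i + ∑ j, AP j * lamP j) := by
  classical
  set D : ℝ := ∑ i, AM i * (-lamM i) with hD
  set P : ℝ := ∑ j, AP j * lamP j with hPdef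
  have hP0 : 0 ≤ P := Finset.sum_nonneg fun j _ => mul_nonneg (hAP j) (hlamP j).le
  have hDeq : ∑ i, AM i * lamM i = -D := by
    rw [hD, ← Finset.sum_neg_distrib]; congr 1; ext i; ring
  have hPD : P < D := by rw [hDeq] at hneg; linarith
  have hD0 : 0 < D := lt_of_le_of_lt hP0 hPD
  have hn0 : (0:ℝ) < n := by exact_mod_cast hn
  set ε : ℝ := (D - P) / (D * n) with hε
  have hε0 : 0 < ε := div_pos (by linarith) (by positivity)
  set v : Fin n → ℝ := fun j => AP j * lamP j / D + ε with hv
  set w : Fin m → ℝ := fun i => AM i * (-lamM i) / D with hw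
  have hv0 : ∀ j, 0 < v j := fun j =>
    add_pos_of_nonneg_of_pos (div_nonneg (mul_nonneg (hAP j) (hlamP j).le) hD0.le) hε0
  have hw0 : ∀ i, 0 ≤ w i := fun i =>
    div_nonneg (mul_nonneg (hAM i) (by linarith [hlamM i])) hD0.le
  set c : Fin m → Fin n → ℝ := fun i j => AM i * v j with hc
  set d : Fin m → Fin n → ℝ := fun i j => AP j * w i with hd
  set b : Fin m → Fin n → ℝ := fun i j => c i j + d i j with hb
  set a : Fin m → Fin n → ℝ := fun i j => if b i j = 0 then 0 else d i j / b i j with ha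
  have hc0 : ∀ i j, 0 ≤ c i j := fun i j => mul_nonneg (hAM i) (hv0 j).le
  have hd0 : ∀ i j, 0 ≤ d i j := fun i j => mul_nonneg (hAP j) (hw0 i)
  have hbcd : ∀ i j, b i j = c i j + d i j := fun _ _ => rfl
  have hb0 : ∀ i j, 0 ≤ b i j := fun i j => add_nonneg (hc0 i j) (hd0 i j)
  -- when b = 0, both c and d are 0
  have hbz : ∀ i j, b i j = 0 → c i j = 0 ∧ d i j = 0 := by
    intro i j h
    rw [hbcd] at h
    constructor <;> linarith [hc0 i j, hd0 i j]
  -- b * a = d, b * (1-a) = c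
  have hba : ∀ i j, b i j * a i j = d i j := by
    intro i j
    by_cases h : b i j = 0
    · simp [ha, h, (hbz i j h).2]
    · simp only [ha, if_neg h]
      field_simp
  have hb1a : ∀ i j, b i j * (1 - a i j) = c i j := by
    intro i j
    have h2 : b i j * (1 - a i j) = b i j - b i j * a i j := by ring
    rw [h2, hba i j, hbcd]
    ring
  -- key identity
  have hkey : ∀ i j, c i j * lamM i + d i j * lamP j = AM i * lamM i * ε := by
    intro i j
    simp only [hc, hd, hv, hw]
    field_simp
    ring
  -- b ≠ 0 → AM i > 0
  have hbpos : ∀ i j, b i j ≠ 0 → 0 < AM i := by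
    intro i j h
    rcases (hAM i).lt_or_eq with h' | h'
    · exact h'
    · exfalso; apply h
      simp [hb, hc, hd, hw, ← h']
  -- a ∈ [0,1]
  have haIcc : ∀ i j, a i j ∈ Set.Icc (0:ℝ) 1 := by
    intro i j
    by_cases h : b i j = 0
    · simp [ha, h]
    · have hbp : 0 < b i j := (hb0 i j).lt_of_ne (Ne.symm h)
      simp only [ha, if_neg h, Set.mem_Icc]
      refine ⟨div_nonneg (hd0 i j) hbp.le, ?_⟩
      rw [div_le_one hbp, hbcd]
      linarith [hc0 i j]
  -- expansion identity
  have expand : ∀ i j, b i j * ((1 - a i j) * lamM i + a i j * lamP j)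
      = c i j * lamM i + d i j * lamP j := by
    intro i j
    calc b i j * ((1 - a i j) * lamM i + a i j * lamP j)
        = (b i j * (1 - a i j)) * lamM i + (b i j * a i j) * lamP j := by ring
      _ = c i j * lamM i + d i j * lamP j := by rw [hb1a, hba]
  -- pairwise negativity
  have hpair : ∀ i j, (1 - a i j) * lamM i + a i j * lamP j < 0 := by
    intro i j
    by_cases h : b i j = 0
    · simp [ha, h, hlamM i]
    · have hbp : 0 < b i j := (hb0 i j).lt_of_ne (Ne.symm h)
      have hAMi := hbpos i j h
      have hneg' : b i j * ((1 - a i j) * lamM i + a i j * lamP j) < 0 := by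
        rw [expand i j, hkey i j]
        exact mul_neg_of_neg_of_pos (mul_neg_of_pos_of_neg hAMi (hlamM i)) hε0
      rcases mul_neg_iff.mp hneg' with ⟨_, h2⟩ | ⟨h1, _⟩
      · exact h2
      · exact absurd hbp (not_lt.mpr h1.le)
  -- sums of v and w
  have hsv : ∑ j, v j = 1 := by
    simp only [hv]
    rw [Finset.sum_add_distrib, ← Finset.sum_div, ← hPdef, Finset.sum_const,
      Finset.card_univ, Fintype.card_fin, nsmul_eq_mul, hε]
    field_simp
    ring
  have hsw : ∑ i, w i = 1 := by
    simp only [hw]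
    rw [← Finset.sum_div, ← hD, div_self hD0.ne']
  -- marginals
  have hmargM : ∀ i, ∑ j, c i j = AM i := by
    intro i
    simp only [hc, ← Finset.mul_sum, hsv, mul_one]
  have hmargP : ∀ j, ∑ i, d i j = AP j := by
    intro j
    simp only [hd, ← Finset.mul_sum, hsw, mul_one]
  have hAMeq : ∀ i, AM i = ∑ j, b i j * (1 - a i j) := by
    intro i
    rw [← hmargM i]
    exact Finset.sum_congr rfl fun j _ => (hb1a i j).symm
  have hAPeq : ∀ j, AP j = ∑ i, b i j * a i j := by
    intro j
    rw [← hmargP j]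
    exact Finset.sum_congr rfl fun i _ => (hba i j).symm
  have hdsum : ∑ i, ∑ j, d i j = ∑ j, AP j := by
    have h1 : ∀ i, ∑ j, d i j = (∑ j, AP j) * w i := by
      intro i
      simp only [hd]
      rw [Finset.sum_mul]
    rw [Finset.sum_congr rfl fun i _ => h1 i, ← Finset.mul_sum, hsw, mul_one]
  refine ⟨a, b, haIcc, hb0, hpair, ?_, hAMeq, hAPeq, ?_⟩
  · have h1 : ∑ i, ∑ j, b i j = (∑ i, ∑ j, c i j) + ∑ i, ∑ j, d i j := by
      rw [← Finset.sum_add_distrib]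
      refine Finset.sum_congr rfl fun i _ => ?_
      rw [← Finset.sum_add_distrib]
    rw [h1, Finset.sum_congr rfl fun i _ => hmargM i, hdsum, hsum]
  · have e1 : ∑ i, ∑ j, c i j * lamM i = ∑ i, AM i * lamM i := by
      refine Finset.sum_congr rfl fun i _ => ?_
      rw [← Finset.sum_mul, hmargM i]
    have e2 : ∑ i, ∑ j, d i j * lamP j = ∑ j, AP j * lamP j := by
      rw [Finset.sum_comm]
      refine Finset.sum_congr rfl fun j _ => ?_
      rw [← Finset.sum_mul, hmargP j]
    calc ∑ i, ∑ j, b i j * ((1 - a i j) * lamM i + a i j * lamP j)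
        = ∑ i, ∑ j, (c i j * lamM i + d i j * lamP j) :=
          Finset.sum_congr rfl fun i _ => Finset.sum_congr rfl fun j _ => expand i j
      _ = (∑ i, ∑ j, c i j * lamM i) + ∑ i, ∑ j, d i j * lamP j := by
          rw [← Finset.sum_add_distrib]
          exact Finset.sum_congr rfl fun i _ => Finset.sum_add_distrib
      _ = ∑ i, AM i * lamM i + ∑ j, AP j * lamP j := by rw [e1, e2]
end

section
/- Let λ₁⁻, …, λ_m⁻ < 0 and λ⁺ > 0 be real numbers, and let A₁⁻, …, A_m⁻, A⁺ be nonnegative real numbers with ∑_{i=1}^m A_i⁻ + A⁺ = 1 and λ := ∑_{i=1}^m A_i⁻ λ_i⁻ + A⁺ λ⁺ < 0. Then there exist real numbers a_i ∈ [0,1] and b_i ≥ 0 (1 ≤ i ≤ m) such that: (1) (1 − a_i) λ_i⁻ + a_i λ⁺ < 0 for every 1 ≤ i ≤ m; (2) ∑_{i=1}^m b_i = 1; (3) A_i⁻ = b_i (1 − a_i) for every 1 ≤ i ≤ m, and A⁺ = ∑_{i=1}^m b_i a_i. Consequently ∑_{i=1}^m b_i ((1 − a_i) λ_i⁻ + a_i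 λ⁺) = λ. -/
/-- **Lemma A.2.** Given negative numbers `λᵢ⁻` and a positive number `λ⁺`, with nonnegative
weights `Aᵢ⁻`, `A⁺` summing to `1` and negative weighted average
`λ = ∑ Aᵢ⁻ λᵢ⁻ + A⁺ λ⁺ < 0`, there are `aᵢ ∈ [0,1]` and `bᵢ ≥ 0` such that each
`(1 - aᵢ) λᵢ⁻ + aᵢ λ⁺` is negative, `∑ bᵢ = 1`, `Aᵢ⁻ = bᵢ (1 - aᵢ)` for every `i`,
`A⁺ = ∑ bᵢ aᵢ`, and consequently `∑ bᵢ ((1 - aᵢ) λᵢ⁻ + aᵢ λ⁺) = λ`. -/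
theorem convex_sums_decomposition_one_positive
    (m : ℕ) (hm : 0 < m)
    (lamM : Fin m → ℝ) (lamP : ℝ)
    (hlamM : ∀ i, lamM i < 0) (hlamP : 0 < lamP)
    (AM : Fin m → ℝ) (AP : ℝ)
    (hAM : ∀ i, 0 ≤ AM i) (hAP : 0 ≤ AP)
    (hsum : ∑ i, AM i + AP = 1)
    (hneg : ∑ i, AM i * lamM i + AP * lamP < 0) :
    ∃ a b : Fin m → ℝ,
      (∀ i, a i ∈ Set.Icc (0 : ℝ) 1) ∧
      (∀ i, 0 ≤ b i) ∧
      (∀ i, (1 - a i) * lamM i + a i * lamP < 0) ∧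
      (∑ i, b i = 1) ∧
      (∀ i, AM i = b i * (1 - a i)) ∧
      (AP = ∑ i, b i * a i) ∧
      (∑ i, b i * ((1 - a i) * lamM i + a i * lamP)
        = ∑ i, AM i * lamM i + AP * lamP) := by
  have hAPlamP : 0 ≤ AP * lamP := mul_nonneg hAP hlamP.le
  set S := ∑ i, AM i * lamM i with hSdef
  have hS : S < 0 := by linarith
  have hSne : S ≠ 0 := hS.ne
  set c : Fin m → ℝ := fun i => AP * (AM i * lamM i) / S with hcdef
  have hterm : ∀ i, AM i * lamM i ≤ 0 := fun i =>
    mul_nonpos_of_nonneg_of_nonpos (hAM i) (hlamM i).le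
  have hc : ∀ i, 0 ≤ c i := by
    intro i
    have h1 : AP * (AM i * lamM i) ≤ 0 := mul_nonpos_of_nonneg_of_nonpos hAP (hterm i)
    exact div_nonneg_iff.mpr (Or.inr ⟨h1, hS.le⟩)
  set b : Fin m → ℝ := fun i => AM i + c i with hbdef
  have hb : ∀ i, 0 ≤ b i := fun i => add_nonneg (hAM i) (hc i)
  have hcb : ∀ i, c i ≤ b i := fun i => by
    simp only [hbdef]; linarith [hAM i]
  set a : Fin m → ℝ := fun i => if b i = 0 then 0 else c i / b i with hadef
  have hAMzero : ∀ i, b i = 0 → AM i = 0 ∧ c i = 0 := by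
    intro i h
    constructor <;> [linarith [hAM i, hc i, show AM i + c i = 0 from h];
      linarith [hAM i, hc i, show AM i + c i = 0 from h]]
  have hsumc : ∑ i, c i = AP := by
    simp only [hcdef]
    rw [← Finset.sum_div, ← Finset.mul_sum, ← hSdef, mul_div_assoc, div_self hSne, mul_one]
  have hba : ∀ i, b i * a i = c i := by
    intro i
    simp only [hadef]
    by_cases h : b i = 0
    · simp [h, (hAMzero i h).2]
    · rw [if_neg h]; field_simp
  have hb1a : ∀ i, b i * (1 - a i) = AM i := by
    intro i
    by_cases h : b i = 0
    · simp [h, (hAMzero i h).1]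
    · have := hba i
      have : b i * (1 - a i) = b i - c i := by rw [mul_sub, mul_one, hba i]
      rw [this]; simp only [hbdef]; ring
  refine ⟨a, b, ?_, hb, ?_, ?_, fun i => (hb1a i).symm, ?_, ?_⟩
  · intro i
    simp only [hadef]
    by_cases h : b i = 0
    · simp [h]
    · rw [if_neg h]
      have hbpos : 0 < b i := lt_of_le_of_ne (hb i) (Ne.symm h)
      exact ⟨div_nonneg (hc i) (hb i), (div_le_one hbpos).2 (hcb i)⟩
  · intro i
    by_cases h : b i = 0
    · simp only [hadef, if_pos h]
      simpa using hlamM i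
    · have hbpos : 0 < b i := lt_of_le_of_ne (hb i) (Ne.symm h)
      have hAMpos : 0 < AM i := by
        rcases lt_or_eq_of_le (hAM i) with h' | h'
        · exact h'
        · exfalso; apply h
          have hc0 : c i = 0 := by simp [hcdef, ← h']
          simp [hbdef, ← h', hc0]
      have hkey : AM i * lamM i + c i * lamP = (AM i * lamM i) * ((S + AP * lamP) / S) := by
        simp only [hcdef]; field_simp
      have hratio : 0 < (S + AP * lamP) / S := div_pos_of_neg_of_neg (by linarith) hS
      have hneg2 : AM i * lamM i + c i * lamP < 0 := by
        rw [hkey]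
        exact mul_neg_of_neg_of_pos (mul_neg_of_pos_of_neg hAMpos (hlamM i)) hratio
      have hexp : b i * ((1 - a i) * lamM i + a i * lamP)
          = AM i * lamM i + c i * lamP := by
        have : b i * ((1 - a i) * lamM i + a i * lamP)
            = (b i * (1 - a i)) * lamM i + (b i * a i) * lamP := by ring
        rw [this, hb1a i, hba i]
      nlinarith [hexp, hneg2, hbpos]
  · simp only [hbdef]
    rw [Finset.sum_add_distrib, hsumc]
    exact hsum
  · rw [eq_comm]
    calc ∑ i, b i * a i = ∑ i, c i := Finset.sum_congr rfl fun i _ => hba i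
      _ = AP := hsumc
  · have : ∀ i ∈ Finset.univ, b i * ((1 - a i) * lamM i + a i * lamP)
        = AM i * lamM i + c i * lamP := by
      intro i _
      have : b i * ((1 - a i) * lamM i + a i * lamP)
          = (b i * (1 - a i)) * lamM i + (b i * a i) * lamP := by ring
      rw [this, hb1a i, hba i]
    rw [Finset.sum_congr rfl this, Finset.sum_add_distrib, ← Finset.sum_mul, hsumc]
end

section
/- Let λ⁻ < 0 and λ₁⁺, …, λ_n⁺ > 0 be real numbers, and let A⁻, A₁⁺, …, A_n⁺ be nonnegative real numbers with A⁻ + ∑_{j=1}^n A_j⁺ = 1 and λ := A⁻ λ⁻ + ∑_{j=1}^n A_j⁺ λ_j⁺ < 0. Then there exist real numbers a_j ∈ [0,1] and b_j ≥ 0 (1 ≤ j ≤ n) such that: (1) (1 − a_j) λ⁻ + a_j λ_j⁺ < 0 for every 1 ≤ j ≤ n; (2) ∑_{j=1}^n b_j = 1; (3) A_j⁺ = b_j a_j for every 1 ≤ j ≤ n, and A⁻ = ∑_{j=1}^n b_j (1 − a_j). Consequently ∑_{j=1}^n b_j ((1 − a_j) λ⁻ + a_j λ_j⁺) = λ. 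-/
/-!
Distribute the negative mass `A⁻` over the indices in proportion to the positive contributions
`Aⱼ⁺ λⱼ⁺`, i.e. give index `j` the share `cⱼ A⁻` with `cⱼ = Aⱼ⁺ λⱼ⁺ / ∑ₖ Aₖ⁺ λₖ⁺`, and set
`bⱼ = Aⱼ⁺ + cⱼ A⁻`, `aⱼ = Aⱼ⁺ / bⱼ`. Then `bⱼ ((1 - aⱼ) λ⁻ + aⱼ λⱼ⁺) = cⱼ A⁻ λ⁻ + Aⱼ⁺ λⱼ⁺ = cⱼ λ`,
which is negative whenever `bⱼ > 0`.
-/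

open Finset Set

theorem exists_mem_stdSimplex_mul_sum_eq {ι : Type*} [Fintype ι] [Nonempty ι] {w : ι → ℝ}
    (hw : ∀ i, 0 ≤ w i) : ∃ c ∈ stdSimplex ℝ ι, ∀ i, c i * ∑ j, w j = w i := by
  classical
  rcases (sum_nonneg fun i _ => hw i : 0 ≤ ∑ j, w j).eq_or_lt with hzero | hpos
  · have hw0 : ∀ i, w i = 0 := fun i =>
      (sum_eq_zero_iff_of_nonneg fun i _ => hw i).mp hzero.symm i (mem_univ i)
    exact ⟨_, single_mem_stdSimplex ℝ (Classical.arbitrary ι), fun i => by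
      rw [← hzero, mul_zero, hw0]⟩
  · refine ⟨fun i => w i / ∑ j, w j, ⟨fun i => div_nonneg (hw i) hpos.le, ?_⟩,
      fun i => div_mul_cancel₀ _ hpos.ne'⟩
    rw [← sum_div, div_self hpos.ne']

section SplitMass

variable {p q : ℝ}

theorem div_add_mem_Icc (hp : 0 ≤ p) (hq : 0 ≤ q) : p / (p + q) ∈ Icc (0 : ℝ) 1 :=
  ⟨div_nonneg hp (add_nonneg hp hq),
    div_le_one_of_le₀ (le_add_of_nonneg_right hq) (add_nonneg hp hq)⟩

theorem add_mul_div_add_self (hp : 0 ≤ p) (hq : 0 ≤ q) : (p + q) * (p / (p + q)) = p := by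
  rcases (add_nonneg hp hq).eq_or_lt with h | h
  · rw [← h, zero_mul]; linarith
  · exact mul_div_cancel₀ p h.ne'

theorem add_mul_one_sub_div_add_self (hp : 0 ≤ p) (hq : 0 ≤ q) :
    (p + q) * (1 - p / (p + q)) = q := by
  rw [mul_one_sub, add_mul_div_add_self hp hq, add_sub_cancel_left]

/-- If `p + q = 0` then `p / (p + q) = 0` and the combination is `lamM` itself. -/
theorem one_sub_div_add_mul_add_div_add_mul_neg (hp : 0 ≤ p) (hq : 0 ≤ q) {lamM lamP : ℝ}
    (hlamM : lamM < 0) (h : 0 < p + q → q * lamM + p * lamP < 0) :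
    (1 - p / (p + q)) * lamM + p / (p + q) * lamP < 0 := by
  rcases (add_nonneg hp hq).eq_or_lt with hzero | hpos
  · simpa [← hzero] using hlamM
  · refine neg_of_mul_neg_right ?_ hpos.le
    calc (p + q) * ((1 - p / (p + q)) * lamM + p / (p + q) * lamP)
        = (p + q) * (1 - p / (p + q)) * lamM + (p + q) * (p / (p + q)) * lamP := by ring
      _ = q * lamM + p * lamP := by
        rw [add_mul_one_sub_div_add_self hp hq, add_mul_div_add_self hp hq]
      _ < 0 := h hpos

end SplitMass

theorem sum_mul_one_sub_mul_add_mul {ι : Type*} [Fintype ι] (a b lamP : ι → ℝ) (lamM : ℝ) :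
    ∑ j, b j * ((1 - a j) * lamM + a j * lamP j)
      = (∑ j, b j * (1 - a j)) * lamM + ∑ j, b j * a j * lamP j := by
  rw [sum_mul, ← sum_add_distrib]
  exact sum_congr rfl fun j _ => by ring

/-- **Lemma A.3.** Given a negative number `λ⁻` and positive numbers `λⱼ⁺`, with nonnegative
weights `A⁻`, `Aⱼ⁺` summing to `1` and negative weighted average
`λ = A⁻ λ⁻ + ∑ Aⱼ⁺ λⱼ⁺ < 0`, there are `aⱼ ∈ [0,1]` and `bⱼ ≥ 0` such that each
`(1 - aⱼ) λ⁻ + aⱼ λⱼ⁺` is negative, `∑ bⱼ = 1`, `Aⱼ⁺ = bⱼ aⱼ` for every `j`,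
`A⁻ = ∑ bⱼ (1 - aⱼ)`, and consequently `∑ bⱼ ((1 - aⱼ) λ⁻ + aⱼ λⱼ⁺) = λ`. -/
theorem convex_sums_decomposition_one_negative
    (n : ℕ) (hn : 0 < n)
    (lamM : ℝ) (lamP : Fin n → ℝ)
    (hlamM : lamM < 0) (hlamP : ∀ j, 0 < lamP j)
    (AM : ℝ) (AP : Fin n → ℝ)
    (hAM : 0 ≤ AM) (hAP : ∀ j, 0 ≤ AP j)
    (hsum : AM + ∑ j, AP j = 1)
    (hneg : AM * lamM + ∑ j, AP j * lamP j < 0) :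
    ∃ a b : Fin n → ℝ,
      (∀ j, a j ∈ Set.Icc (0 : ℝ) 1) ∧
      (∀ j, 0 ≤ b j) ∧
      (∀ j, (1 - a j) * lamM + a j * lamP j < 0) ∧
      (∑ j, b j = 1) ∧
      (∀ j, AP j = b j * a j) ∧
      (AM = ∑ j, b j * (1 - a j)) ∧
      (∑ j, b j * ((1 - a j) * lamM + a j * lamP j)
        = AM * lamM + ∑ j, AP j * lamP j) := by
  have : Nonempty (Fin n) := ⟨⟨0, hn⟩⟩
  obtain ⟨c, ⟨hc0, hc1⟩, hcw⟩ :=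
    exists_mem_stdSimplex_mul_sum_eq fun j => mul_nonneg (hAP j) (hlamP j).le
  have hcAM : ∀ j, 0 ≤ c j * AM := fun j => mul_nonneg (hc0 j) hAM
  have hba : ∀ j, AP j = (AP j + c j * AM) * (AP j / (AP j + c j * AM)) := fun j =>
    (add_mul_div_add_self (hAP j) (hcAM j)).symm
  have hAMeq : AM = ∑ j, (AP j + c j * AM) * (1 - AP j / (AP j + c j * AM)) := by
    simp only [add_mul_one_sub_div_add_self (hAP _) (hcAM _), ← sum_mul, hc1, one_mul]
  have hsign : ∀ j, 0 < AP j + c j * AM → c j * AM * lamM + AP j * lamP j < 0 := by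
    intro j hb
    have hcpos : 0 < c j := (hc0 j).lt_of_ne' fun hcj => by
      have hAPj : AP j * lamP j = 0 := by rw [← hcw j, hcj, zero_mul]
      simp [hcj, (mul_eq_zero.mp hAPj).resolve_right (hlamP j).ne'] at hb
    calc c j * AM * lamM + AP j * lamP j = c j * (AM * lamM + ∑ j, AP j * lamP j) := by
          rw [← hcw j]; ring
      _ < 0 := mul_neg_of_pos_of_neg hcpos hneg
  refine ⟨fun j => AP j / (AP j + c j * AM), fun j => AP j + c j * AM,
    fun j => div_add_mem_Icc (hAP j) (hcAM j), fun j => add_nonneg (hAP j) (hcAM j),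
    fun j => one_sub_div_add_mul_add_div_add_mul_neg (hAP j) (hcAM j) hlamM (hsign j),
    ?_, hba, hAMeq, ?_⟩
  · rw [sum_add_distrib, ← sum_mul, hc1]; linarith
  · rw [sum_mul_one_sub_mul_add_mul, ← hAMeq]
    simp only [← hba]
end

section
/- One has 0 < t₀ < t₁ < 1, where t₀ = h₂⁻¹(0) and t₁ = h₁⁻¹(1); moreover p⁺ < h₂⁻¹(p⁺) < h₁⁻¹(q⁺) < q⁺; and every t ∈ [0,1] with both h₁(t) ∈ (0,1) and h₂(t) ∈ (0,1) satisfies t₀ < t < t₁. -/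
/-!
A map with derivative at least `λ > 1` repels from its fixed point `p`: `h x - x` has the sign
of `x - p`. So the preimage of a point lying on one side of `p` sits strictly between `p` and that
point, which places `t₀`, `t₁`, `h₂⁻¹(p⁺)` and `h₁⁻¹(q⁺)`. If `t₁ ≤ t₀`, the superposition
hypothesis fails at `min t₀ 1`, where `h₁ ≥ 1` and `h₂ ≤ 0`.
-/

open Function Set

section Expanding

variable {h : ℝ → ℝ} {lam p x y : ℝ}

theorem lt_apply_of_fixedPoint_lt (hd : Differentiable ℝ h) (hderiv : ∀ t, lam ≤ deriv h t)
    (hlam : 1 < lam) (hfix : h p = p) (hx : p < x) : x < h x := by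
  have := mul_sub_le_image_sub_of_le_deriv hd hderiv hx.le
  rw [hfix] at this
  nlinarith

theorem apply_lt_of_lt_fixedPoint (hd : Differentiable ℝ h) (hderiv : ∀ t, lam ≤ deriv h t)
    (hlam : 1 < lam) (hfix : h p = p) (hx : x < p) : h x < x := by
  have := mul_sub_le_image_sub_of_le_deriv hd hderiv hx.le
  rw [hfix] at this
  nlinarith

theorem mem_Ioo_of_apply_eq_of_fixedPoint_lt (hmono : StrictMono h) (hd : Differentiable ℝ h)
    (hderiv : ∀ t, lam ≤ deriv h t) (hlam : 1 < lam) (hfix : h p = p) (hxy : h x = y)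
    (hy : p < y) : x ∈ Ioo p y := by
  have hpx : p < x := hmono.lt_iff_lt.mp (by rwa [hfix, hxy])
  exact ⟨hpx, hxy ▸ lt_apply_of_fixedPoint_lt hd hderiv hlam hfix hpx⟩

theorem mem_Ioo_of_apply_eq_of_lt_fixedPoint (hmono : StrictMono h) (hd : Differentiable ℝ h)
    (hderiv : ∀ t, lam ≤ deriv h t) (hlam : 1 < lam) (hfix : h p = p) (hxy : h x = y)
    (hy : y < p) : x ∈ Ioo y p := by
  have hxp : x < p := hmono.lt_iff_lt.mp (by rwa [hfix, hxy])
  exact ⟨hxy ▸ apply_lt_of_lt_fixedPoint hd hderiv hlam hfix hxp, hxp⟩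

end Expanding

theorem lt_of_forall_mem_Icc_lt_or_pos {h₁ h₂ : ℝ → ℝ} (h₁mono : StrictMono h₁)
    (h₂mono : StrictMono h₂) (hsup : ∀ t ∈ Icc (0 : ℝ) 1, h₁ t < 1 ∨ 0 < h₂ t) {t₀ t₁ : ℝ}
    (ht₀ : h₂ t₀ = 0) (ht₁ : h₁ t₁ = 1) (h0t₀ : 0 < t₀) (ht₁1 : t₁ < 1) : t₀ < t₁ := by
  by_contra! hle
  rcases hsup (min t₀ 1) ⟨le_min h0t₀.le zero_le_one, min_le_right _ _⟩ with hs | hs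
  · have : min t₀ 1 < t₁ := h₁mono.lt_iff_lt.mp (ht₁ ▸ hs)
    exact this.not_ge (le_min hle ht₁1.le)
  · have : t₀ < min t₀ 1 := h₂mono.lt_iff_lt.mp (ht₀ ▸ hs)
    exact this.not_ge (min_le_left _ _)

/-- **Superposition region (Remark 5.2 and Eq. (5.4)).** Let `h₁, h₂` be strictly increasing
`C²` diffeomorphisms of `ℝ` with derivative at least `λ > 1`, where `h₁` has a fixed point
`p⁺ < 0`, `h₂` has a fixed point `q⁺ > 1`, and for every `t ∈ [0,1]` either `h₁(t) ∈ (0,1)`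
or `h₂(t) ∈ (0,1)`. With `t₀ = h₂⁻¹(0)` and `t₁ = h₁⁻¹(1)`, one has `0 < t₀ < t₁ < 1`,
`p⁺ < h₂⁻¹(p⁺) < h₁⁻¹(q⁺) < q⁺`, and every `t ∈ [0,1]` with both `h₁(t) ∈ (0,1)` and
`h₂(t) ∈ (0,1)` satisfies `t₀ < t < t₁`. -/
theorem superposition_region
    (lam : ℝ) (hlam : 1 < lam)
    (h₁ h₂ : ℝ → ℝ)
    (h₁C : ContDiff ℝ 2 h₁) (h₂C : ContDiff ℝ 2 h₂)
    (h₁mono : StrictMono h₁) (h₂mono : StrictMono h₂)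
    (h₁bij : Function.Bijective h₁) (h₂bij : Function.Bijective h₂)
    (h₁deriv : ∀ t, lam ≤ deriv h₁ t) (h₂deriv : ∀ t, lam ≤ deriv h₂ t)
    (p q : ℝ) (hp : p < 0) (hq : 1 < q)
    (hfp : h₁ p = p) (hfq : h₂ q = q)
    (hsup : ∀ t ∈ Set.Icc (0 : ℝ) 1, h₁ t ∈ Set.Ioo (0 : ℝ) 1 ∨ h₂ t ∈ Set.Ioo (0 : ℝ) 1)
    (t₀ t₁ : ℝ) (ht₀ : h₂ t₀ = 0) (ht₁ : h₁ t₁ = 1) :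
    0 < t₀ ∧ t₀ < t₁ ∧ t₁ < 1 ∧
    p < Function.invFun h₂ p ∧
    Function.invFun h₂ p < Function.invFun h₁ q ∧
    Function.invFun h₁ q < q ∧
    ∀ t ∈ Set.Icc (0 : ℝ) 1, h₁ t ∈ Set.Ioo (0 : ℝ) 1 → h₂ t ∈ Set.Ioo (0 : ℝ) 1 →
      t₀ < t ∧ t < t₁ := by
  have h₁d : Differentiable ℝ h₁ := h₁C.differentiable (by norm_num)
  have h₂d : Differentiable ℝ h₂ := h₂C.differentiable (by norm_num)
  have hb : h₁ (invFun h₁ q) = q := rightInverse_invFun h₁bij.2 q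
  have ha : h₂ (invFun h₂ p) = p := rightInverse_invFun h₂bij.2 p
  have ht₁_mem := mem_Ioo_of_apply_eq_of_fixedPoint_lt h₁mono h₁d h₁deriv hlam
    hfp ht₁ (by linarith)
  have ht₀_mem := mem_Ioo_of_apply_eq_of_lt_fixedPoint h₂mono h₂d h₂deriv hlam
    hfq ht₀ (by linarith)
  have hb_mem := mem_Ioo_of_apply_eq_of_fixedPoint_lt h₁mono h₁d h₁deriv hlam
    hfp hb (by linarith)
  have ha_mem := mem_Ioo_of_apply_eq_of_lt_fixedPoint h₂mono h₂d h₂deriv hlam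
    hfq ha (by linarith)
  have hat₀ : invFun h₂ p < t₀ := h₂mono.lt_iff_lt.mp (by rwa [ha, ht₀])
  have ht₁b : t₁ < invFun h₁ q := h₁mono.lt_iff_lt.mp (by rwa [ht₁, hb])
  have ht₀t₁ : t₀ < t₁ := lt_of_forall_mem_Icc_lt_or_pos h₁mono h₂mono
    (fun t ht => (hsup t ht).imp (·.2) (·.1)) ht₀ ht₁ ht₀_mem.1 ht₁_mem.2
  refine ⟨ht₀_mem.1, ht₀t₁, ht₁_mem.2, ha_mem.1, by linarith, hb_mem.2,
    fun t _ h₁t h₂t => ⟨h₂mono.lt_iff_lt.mp ?_, h₁mono.lt_iff_lt.mp ?_⟩⟩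
  · rw [ht₀]; exact h₂t.1
  · rw [ht₁]; exact h₁t.2
end

section
/- For every t ∈ [p⁺, q⁺] there exists a sequence ω : ℕ → {1,2} such that, setting s₀ := t and s_{k+1} := h_{ω(k)}(s_k), one has s_k ∈ [p⁺, q⁺] for every k ∈ ℕ. -/
/-- **(Consequence of Eq. (5.4), cf. Claim 5.21.)** Under the superposition hypothesis for
the expanding maps `h₁, h₂` with fixed points `p⁺ < 0 < 1 < q⁺`: for every `t ∈ [p⁺, q⁺]`
there is a sequence `ω : ℕ → {1,2}` such that the orbit `s₀ = t`,
`s_{k+1} = h_{ω(k)}(s_k)` stays in `[p⁺, q⁺]` for all `k`. -/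
theorem forward_orbit_stays_in_interval
    (lam : ℝ) (hlam : 1 < lam)
    (h₁ h₂ : ℝ → ℝ)
    (h₁C : ContDiff ℝ 2 h₁) (h₂C : ContDiff ℝ 2 h₂)
    (h₁mono : StrictMono h₁) (h₂mono : StrictMono h₂)
    (h₁bij : Function.Bijective h₁) (h₂bij : Function.Bijective h₂)
    (h₁deriv : ∀ t, lam ≤ deriv h₁ t) (h₂deriv : ∀ t, lam ≤ deriv h₂ t)
    (p q : ℝ) (hp : p < 0) (hq : 1 < q)
    (hfp : h₁ p = p) (hfq : h₂ q = q)
    (hsup : ∀ t ∈ Set.Icc (0 : ℝ) 1, h₁ t ∈ Set.Ioo (0 : ℝ) 1 ∨ h₂ t ∈ Set.Ioo (0 : ℝ) 1) :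
    ∀ t ∈ Set.Icc p q, ∃ (ω : ℕ → ℝ → ℝ) (s : ℕ → ℝ),
      (∀ k, ω k = h₁ ∨ ω k = h₂) ∧
      s 0 = t ∧
      (∀ k, s (k + 1) = ω k (s k)) ∧
      (∀ k, s k ∈ Set.Icc p q) := by
  classical
  have mvt : ∀ (f : ℝ → ℝ), ContDiff ℝ 2 f → (∀ x, lam ≤ deriv f x) →
      ∀ a b : ℝ, a ≤ b → lam * (b - a) ≤ f b - f a := by
    intro f hC hd a b hab
    have hdiff : Differentiable ℝ f := hC.differentiable (by norm_num)
    exact Convex.mul_sub_le_image_sub_of_le_deriv convex_univ hdiff.continuous.continuousOn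
      (fun x _ => (hdiff x).differentiableWithinAt) (fun x _ => hd x) a trivial b trivial hab
  -- h₂ 0 < 0
  have h20 : h₂ 0 < 0 := by
    have := mvt h₂ h₂C h₂deriv 0 q (by linarith)
    rw [hfq] at this
    nlinarith
  -- h₁ 0 ∈ (0,1)
  have h10 : h₁ 0 ∈ Set.Ioo (0 : ℝ) 1 := by
    rcases hsup 0 ⟨le_refl _, zero_le_one⟩ with h | h
    · exact h
    · exact absurd h.1 (by linarith)
  -- h₁ 1 > 1
  have h11 : 1 < h₁ 1 := by
    have := mvt h₁ h₁C h₁deriv p 1 (by linarith)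
    rw [hfp] at this
    nlinarith
  -- h₂ 1 ∈ (0,1)
  have h21 : h₂ 1 ∈ Set.Ioo (0 : ℝ) 1 := by
    rcases hsup 1 ⟨zero_le_one, le_refl _⟩ with h | h
    · exact absurd h.2 (by linarith)
    · exact h
  have key : ∀ x : ℝ, x ∈ Set.Icc p q →
      ∃ g : ℝ → ℝ, (g = h₁ ∨ g = h₂) ∧ g x ∈ Set.Icc p q := by
    intro x hx
    by_cases hx0 : x < 0
    · refine ⟨h₁, Or.inl rfl, ?_, ?_⟩
      · rw [← hfp]; exact h₁mono.monotone hx.1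
      · have : h₁ x < h₁ 0 := h₁mono hx0
        linarith [h10.2]
    · by_cases hx1 : 1 < x
      · refine ⟨h₂, Or.inr rfl, ?_, ?_⟩
        · have : h₂ 1 < h₂ x := h₂mono hx1
          linarith [h21.1]
        · rw [← hfq]; exact h₂mono.monotone hx.2
      · rcases hsup x ⟨not_lt.1 hx0, not_lt.1 hx1⟩ with h | h
        · exact ⟨h₁, Or.inl rfl, le_of_lt (lt_trans hp h.1), le_of_lt (lt_trans h.2 hq)⟩
        · exact ⟨h₂, Or.inr rfl, le_of_lt (lt_trans hp h.1), le_of_lt (lt_trans h.2 hq)⟩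
  intro t ht
  let next : {x : ℝ // x ∈ Set.Icc p q} → (ℝ → ℝ) × {x : ℝ // x ∈ Set.Icc p q} :=
    fun x => ⟨(key x.1 x.2).choose, ⟨(key x.1 x.2).choose x.1, (key x.1 x.2).choose_spec.2⟩⟩
  let S : ℕ → {x : ℝ // x ∈ Set.Icc p q} := fun k => Nat.rec ⟨t, ht⟩ (fun _ x => (next x).2) k
  exact ⟨fun k => (next (S k)).1, fun k => (S k).1,
    fun k => (key (S k).1 (S k).2).choose_spec.1, rfl, fun k => rfl, fun k => (S k).2⟩
end

section
/- For every nonempty open interval I ⊆ [p⁺, q⁺] there exist a sequence ω : ℕ → {1,2} and n₀ ∈ ℕ such that for every n ≥ n₀ the image of I under the composition h_{ω(n−1)} ∘ ⋯ ∘ h_{ω(1)} ∘ h_{ω(0)} contains the whole interval [p⁺, q⁺]. -/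
private lemma expand_aux {lam : ℝ} {f : ℝ → ℝ} (hf : Differentiable ℝ f)
    (hd : ∀ t, lam ≤ deriv f t) {x y : ℝ} (hxy : x ≤ y) :
    lam * (y - x) ≤ f y - f x := by
  have hg : Differentiable ℝ (fun t => f t - lam * t) :=
    hf.sub (differentiable_id.const_mul lam)
  have hmono : Monotone (fun t => f t - lam * t) := by
    apply monotone_of_deriv_nonneg hg
    intro t
    have h2 : HasDerivAt (fun s : ℝ => lam * s) lam t := by
      simpa using (hasDerivAt_id t).const_mul lam
    have H : HasDerivAt (fun t => f t - lam * t) (deriv f t - lam) t :=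
      (hf t).hasDerivAt.sub h2
    rw [H.deriv]
    linarith [hd t]
  have h := hmono hxy
  simp only at h
  linarith

private lemma img_aux {f : ℝ → ℝ} (hm : StrictMono f) (hs : Function.Surjective f)
    (a b : ℝ) : f '' Set.Ioo a b = Set.Ioo (f a) (f b) := by
  ext y
  constructor
  · rintro ⟨x, ⟨hx1, hx2⟩, rfl⟩
    exact ⟨hm hx1, hm hx2⟩
  · rintro ⟨hy1, hy2⟩
    obtain ⟨x, rfl⟩ := hs y
    exact ⟨x, ⟨hm.lt_iff_lt.mp hy1, hm.lt_iff_lt.mp hy2⟩, rfl⟩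

/-- **Claim 5.21.** Under the superposition hypothesis for the expanding maps `h₁, h₂` with
fixed points `p⁺ < 0 < 1 < q⁺`: for every nonempty open interval `I = (a, b) ⊆ [p⁺, q⁺]`
there are a sequence `ω : ℕ → {1,2}` and `n₀ ∈ ℕ` such that for every `n ≥ n₀` the image of
`I` under the composition `h_{ω(n-1)} ∘ ⋯ ∘ h_{ω(0)}` contains `[p⁺, q⁺]`. -/
theorem image_of_interval_covers
    (lam : ℝ) (hlam : 1 < lam)
    (h₁ h₂ : ℝ → ℝ)
    (h₁C : ContDiff ℝ 2 h₁) (h₂C : ContDiff ℝ 2 h₂)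
    (h₁mono : StrictMono h₁) (h₂mono : StrictMono h₂)
    (h₁bij : Function.Bijective h₁) (h₂bij : Function.Bijective h₂)
    (h₁deriv : ∀ t, lam ≤ deriv h₁ t) (h₂deriv : ∀ t, lam ≤ deriv h₂ t)
    (p q : ℝ) (hp : p < 0) (hq : 1 < q)
    (hfp : h₁ p = p) (hfq : h₂ q = q)
    (hsup : ∀ t ∈ Set.Icc (0 : ℝ) 1, h₁ t ∈ Set.Ioo (0 : ℝ) 1 ∨ h₂ t ∈ Set.Ioo (0 : ℝ) 1)
    (a b : ℝ) (hab : a < b) (hI : Set.Ioo a b ⊆ Set.Icc p q) :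
    ∃ (ω : ℕ → ℝ → ℝ) (G : ℕ → ℝ → ℝ) (n₀ : ℕ),
      (∀ k, ω k = h₁ ∨ ω k = h₂) ∧
      G 0 = id ∧
      (∀ k, G (k + 1) = ω k ∘ G k) ∧
      (∀ n ≥ n₀, Set.Icc p q ⊆ G n '' Set.Ioo a b) := by
  classical
  have hq0 : (0:ℝ) < q := lt_trans one_pos hq
  have hd₁ : Differentiable ℝ h₁ := h₁C.differentiable (by norm_num)
  have hd₂ : Differentiable ℝ h₂ := h₂C.differentiable (by norm_num)
  have key₁ : ∀ x y : ℝ, x ≤ y → lam * (y - x) ≤ h₁ y - h₁ x :=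
    fun x y h => expand_aux hd₁ h₁deriv h
  have key₂ : ∀ x y : ℝ, x ≤ y → lam * (y - x) ≤ h₂ y - h₂ x :=
    fun x y h => expand_aux hd₂ h₂deriv h
  obtain ⟨t₀, ht₀⟩ := h₂bij.surjective 0
  obtain ⟨t₁, ht₁⟩ := h₁bij.surjective 1
  -- t₀ ≤ t₁
  have ht01 : t₀ ≤ t₁ := by
    by_contra hcon
    push_neg at hcon
    have h20 : h₂ 0 < 0 := by
      have h := key₂ 0 q hq0.le
      rw [hfq] at h
      nlinarith
    have h10 : h₁ 0 ∈ Set.Ioo (0:ℝ) 1 := by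
      rcases hsup 0 ⟨le_refl 0, zero_le_one⟩ with h | h
      · exact h
      · exact absurd h.1 (not_lt.mpr h20.le)
    have ht₁pos : 0 < t₁ := by
      have h := h10.2
      rw [← ht₁] at h
      exact h₁mono.lt_iff_lt.mp h
    have ht₁lt1 : t₁ < 1 := by
      have h11 : 1 < h₁ 1 := by
        have h := key₁ p 1 (by linarith)
        rw [hfp] at h
        nlinarith
      have h : h₁ t₁ < h₁ 1 := by rw [ht₁]; exact h11
      exact h₁mono.lt_iff_lt.mp h
    rcases hsup t₁ ⟨ht₁pos.le, ht₁lt1.le⟩ with h | h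
    · rw [ht₁] at h
      exact lt_irrefl 1 h.2
    · have hneg : h₂ t₁ < 0 := by rw [← ht₀]; exact h₂mono hcon
      exact absurd h.1 (not_lt.mpr hneg.le)
  have hh1t₀ : h₁ t₀ ≤ 1 := by rw [← ht₁]; exact h₁mono.monotone ht01
  -- bounds on a
  have hpa : p ≤ a := by
    by_contra hcon
    push_neg at hcon
    obtain ⟨x, hx1, hx2⟩ := exists_between (lt_min hcon hab)
    exact absurd ((hI ⟨hx1, (lt_min_iff.mp hx2).2⟩).1) (not_le.mpr (lt_min_iff.mp hx2).1)
  have haq : a < q := by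
    obtain ⟨x, hx1, hx2⟩ := exists_between hab
    exact lt_of_lt_of_le hx1 (hI ⟨hx1, hx2⟩).2
  -- the steered dynamics
  set pick : ℝ × ℝ → (ℝ → ℝ) :=
    fun s => if q < s.2 then h₂ else if t₀ ≤ s.1 then h₂ else h₁ with hpick
  set step : ℝ × ℝ → ℝ × ℝ := fun s => (pick s s.1, pick s s.2) with hstep
  set S : ℕ → ℝ × ℝ := fun n => step^[n] (a, b) with hSdef
  set C : ℕ → ℝ := fun n => (S n).1 with hCdef
  set D : ℕ → ℝ := fun n => (S n).2 with hDdef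
  set ω : ℕ → ℝ → ℝ := fun n => pick (S n) with hωdef
  have ωeq : ∀ n, ω n = if q < D n then h₂ else if t₀ ≤ C n then h₂ else h₁ :=
    fun n => rfl
  have hS : ∀ n, S (n+1) = (ω n (C n), ω n (D n)) := by
    intro n
    show step^[n+1] (a,b) = _
    rw [Function.iterate_succ_apply']
  have hC : ∀ n, C (n+1) = ω n (C n) := fun n => congrArg Prod.fst (hS n)
  have hD : ∀ n, D (n+1) = ω n (D n) := fun n => congrArg Prod.snd (hS n)
  have hωcase : ∀ k, ω k = h₁ ∨ ω k = h₂ := by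
    intro k
    rw [ωeq k]
    split_ifs
    · right; rfl
    · right; rfl
    · left; rfl
  have monoω : ∀ n, StrictMono (ω n) := by
    intro n
    rcases hωcase n with h | h <;> rw [h] <;> assumption
  have surjω : ∀ n, Function.Surjective (ω n) := by
    intro n
    rcases hωcase n with h | h <;> rw [h]
    · exact h₁bij.surjective
    · exact h₂bij.surjective
  have keyω : ∀ n x y, x ≤ y → lam * (y - x) ≤ ω n y - ω n x := by
    intro n x y hxy
    rcases hωcase n with h | h <;> rw [h]
    · exact key₁ x y hxy
    · exact key₂ x y hxy
  have hCD : ∀ n, C n < D n := by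
    intro n
    induction n with
    | zero => exact hab
    | succ n ih => rw [hC n, hD n]; exact monoω n ih
  -- invariant
  have hInv : ∀ n, C n < q ∧ (q < D n ∨ p ≤ C n) := by
    intro n
    induction n with
    | zero => exact ⟨haq, Or.inr hpa⟩
    | succ n ih =>
      obtain ⟨ih1, ih2⟩ := ih
      by_cases hcase : q < D n
      · have hω : ω n = h₂ := by rw [ωeq n, if_pos hcase]
        rw [hC n, hD n, hω]
        refine ⟨?_, Or.inl ?_⟩
        · calc h₂ (C n) < h₂ q := h₂mono ih1
            _ = q := hfq
        · calc q = h₂ q := hfq.symm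
            _ < h₂ (D n) := h₂mono hcase
      · have hpC : p ≤ C n := ih2.resolve_left hcase
        by_cases hcase2 : t₀ ≤ C n
        · have hω : ω n = h₂ := by rw [ωeq n, if_neg hcase, if_pos hcase2]
          rw [hC n, hω]
          refine ⟨?_, Or.inr ?_⟩
          · calc h₂ (C n) < h₂ q := h₂mono ih1
              _ = q := hfq
          · have h0 : (0:ℝ) ≤ h₂ (C n) := by
              rw [← ht₀]; exact h₂mono.monotone hcase2
            linarith
        · have hω : ω n = h₁ := by rw [ωeq n, if_neg hcase, if_neg hcase2]
          rw [hC n, hω]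
          refine ⟨?_, Or.inr ?_⟩
          · have h := h₁mono (not_le.mp hcase2)
            linarith
          · have h : h₁ p ≤ h₁ (C n) := h₁mono.monotone hpC
            rw [hfp] at h
            exact h
  -- growth of length
  have hlen : ∀ n, lam ^ n * (b - a) ≤ D n - C n := by
    intro n
    induction n with
    | zero =>
      have e : D 0 - C 0 = b - a := rfl
      rw [e, pow_zero, one_mul]
    | succ n ih =>
      rw [hC n, hD n]
      have h1 := keyω n (C n) (D n) (hCD n).le
      calc lam ^ (n+1) * (b - a) = lam * (lam ^ n * (b - a)) := by ring
        _ ≤ lam * (D n - C n) := by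
            apply mul_le_mul_of_nonneg_left ih (by linarith)
        _ ≤ ω n (D n) - ω n (C n) := h1
  -- the right endpoint eventually exceeds q
  have hex : ∃ n, q < D n := by
    by_contra hcon
    push_neg at hcon
    obtain ⟨N, hN⟩ := pow_unbounded_of_one_lt ((q - p)/(b - a)) hlam
    have hba : 0 < b - a := by linarith
    have hqp : q - p < lam ^ N * (b - a) := by
      rw [div_lt_iff₀ hba] at hN
      linarith
    have h1 := hlen N
    have h2 := (hInv N).2.resolve_left (not_lt.mpr (hcon N))
    have h3 := hcon N
    linarith
  obtain ⟨n₁, hn₁⟩ := hex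
  -- persistence of q < D
  have hpers : ∀ n, n₁ ≤ n → q < D n := by
    intro n hn
    induction n, hn using Nat.le_induction with
    | base => exact hn₁
    | succ n hn ih =>
      have hω : ω n = h₂ := by rw [ωeq n, if_pos ih]
      rw [hD n, hω]
      calc q = h₂ q := hfq.symm
        _ < h₂ (D n) := h₂mono ih
  have hωh₂ : ∀ n, n₁ ≤ n → ω n = h₂ := fun n hn => by
    rw [ωeq n, if_pos (hpers n hn)]
  -- descent of the left endpoint
  have hdec : ∀ n, n₁ ≤ n → C (n+1) ≤ C n - (lam - 1) * (q - C n) := by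
    intro n hn
    rw [hC n, hωh₂ n hn]
    have h := key₂ (C n) q (hInv n).1.le
    rw [hfq] at h
    linarith
  have hCmono : ∀ n, n₁ ≤ n → C n ≤ C n₁ := by
    intro n hn
    induction n, hn using Nat.le_induction with
    | base => exact le_refl _
    | succ n hn ih =>
      have h1 := hdec n hn
      have h2 : C n < q := (hInv n).1
      nlinarith
  have hβ : 0 < (lam - 1) * (q - C n₁) := by
    have h := (hInv n₁).1
    nlinarith
  have hlin : ∀ k : ℕ, C (n₁ + k) ≤ C n₁ - (k : ℝ) * ((lam - 1) * (q - C n₁)) := by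
    intro k
    induction k with
    | zero => simp
    | succ k ih =>
      have h1 := hdec (n₁ + k) (Nat.le_add_right _ _)
      have h2 : C (n₁ + k) ≤ C n₁ := hCmono _ (Nat.le_add_right _ _)
      have h3 : (lam - 1) * (q - C n₁) ≤ (lam - 1) * (q - C (n₁ + k)) := by nlinarith
      have heq : n₁ + (k+1) = (n₁ + k) + 1 := rfl
      rw [heq]
      push_cast
      linarith
  obtain ⟨k, hk⟩ := exists_nat_gt ((C n₁ - p) / ((lam - 1) * (q - C n₁)))
  have hkp : C (n₁ + k) < p := by
    have h := hlin k
    rw [div_lt_iff₀ hβ] at hk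
    linarith
  have hbelow : ∀ n, n₁ + k ≤ n → C n < p := by
    intro n hn
    induction n, hn using Nat.le_induction with
    | base => exact hkp
    | succ n hn ih =>
      have hω := hωh₂ n (le_trans (Nat.le_add_right _ _) hn)
      rw [hC n, hω]
      have h2p : h₂ p ≤ p - (lam - 1) * (q - p) := by
        have h := key₂ p q (by linarith)
        rw [hfq] at h
        linarith
      have h : h₂ (C n) < h₂ p := h₂mono ih
      nlinarith
  -- the compositions
  set G : ℕ → ℝ → ℝ := fun n => Nat.rec id (fun m g => ω m ∘ g) n with hGdef
  have hG0 : G 0 = id := rfl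
  have hGs : ∀ m, G (m+1) = ω m ∘ G m := fun m => rfl
  have himg : ∀ n, G n '' Set.Ioo a b = Set.Ioo (C n) (D n) := by
    intro n
    induction n with
    | zero => rw [hG0, Set.image_id]; rfl
    | succ n ih =>
      rw [hGs n, Set.image_comp, ih, img_aux (monoω n) (surjω n), ← hC n, ← hD n]
  refine ⟨ω, G, n₁ + k, hωcase, hG0, hGs, ?_⟩
  intro n hn
  rw [himg n]
  intro x hx
  have h1 : C n < p := hbelow n hn
  have h2 : q < D n := hpers n (le_trans (Nat.le_add_right n₁ k) hn)
  exact ⟨lt_of_lt_of_le h1 hx.1, lt_of_le_of_lt hx.2 h2⟩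
end

section
/- Let T ∈ (t₀, t₁). Then h₂(T) < T < h₁(T), and the interval [h₂(T), h₁(T)] is forward invariant under the core map: φ_T([h₂(T), h₁(T)]) ⊆ [h₂(T), h₁(T)]. -/
/-- The core map `φ_T`: apply `h₁` on `(-∞, T]` and `h₂` on `(T, ∞)`. -/
noncomputable def coreMap (h₁ h₂ : ℝ → ℝ) (T : ℝ) (t : ℝ) : ℝ :=
  if t ≤ T then h₁ t else h₂ t

private lemma expand_above (h : ℝ → ℝ) (hC : ContDiff ℝ 2 h)
    (lam : ℝ) (hlam : 1 < lam) (hd : ∀ t, lam ≤ deriv h t)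
    (p : ℝ) (hfp : h p = p) : ∀ t, p < t → t < h t := by
  intro t ht
  have hdiff : Differentiable ℝ h := hC.differentiable (by norm_num)
  obtain ⟨c, _, hc⟩ := exists_deriv_eq_slope h ht hdiff.continuous.continuousOn
    hdiff.differentiableOn
  have h1 : (1 : ℝ) < (h t - h p) / (t - p) := lt_of_lt_of_le hlam (hc ▸ hd c)
  have h2 : t - p < h t - h p := by
    have := (lt_div_iff₀ (by linarith)).mp h1
    linarith
  rw [hfp] at h2; linarith

private lemma contract_below (h : ℝ → ℝ) (hC : ContDiff ℝ 2 h)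
    (lam : ℝ) (hlam : 1 < lam) (hd : ∀ t, lam ≤ deriv h t)
    (q : ℝ) (hfq : h q = q) : ∀ t, t < q → h t < t := by
  intro t ht
  have hdiff : Differentiable ℝ h := hC.differentiable (by norm_num)
  obtain ⟨c, _, hc⟩ := exists_deriv_eq_slope h ht hdiff.continuous.continuousOn
    hdiff.differentiableOn
  have h1 : (1 : ℝ) < (h q - h t) / (q - t) := lt_of_lt_of_le hlam (hc ▸ hd c)
  have h2 : q - t < h q - h t := by
    have := (lt_div_iff₀ (by linarith)).mp h1
    linarith
  rw [hfq] at h2; linarith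

/-- **Claim 5.22.** Under the superposition hypothesis for the expanding maps `h₁, h₂`:
for every `T ∈ (t₀, t₁)` one has `h₂(T) < T < h₁(T)`, and the interval `[h₂(T), h₁(T)]`
is forward invariant under the core map `φ_T`. -/
theorem coreMap_interval_invariant
    (lam : ℝ) (hlam : 1 < lam)
    (h₁ h₂ : ℝ → ℝ)
    (h₁C : ContDiff ℝ 2 h₁) (h₂C : ContDiff ℝ 2 h₂)
    (h₁mono : StrictMono h₁) (h₂mono : StrictMono h₂)
    (h₁bij : Function.Bijective h₁) (h₂bij : Function.Bijective h₂)
    (h₁deriv : ∀ t, lam ≤ deriv h₁ t) (h₂deriv : ∀ t, lam ≤ deriv h₂ t)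
    (p q : ℝ) (hp : p < 0) (hq : 1 < q)
    (hfp : h₁ p = p) (hfq : h₂ q = q)
    (hsup : ∀ t ∈ Set.Icc (0 : ℝ) 1, h₁ t ∈ Set.Ioo (0 : ℝ) 1 ∨ h₂ t ∈ Set.Ioo (0 : ℝ) 1)
    (t₀ t₁ : ℝ) (ht₀ : h₂ t₀ = 0) (ht₁ : h₁ t₁ = 1)
    (T : ℝ) (hT : T ∈ Set.Ioo t₀ t₁) :
    h₂ T < T ∧ T < h₁ T ∧
    coreMap h₁ h₂ T '' Set.Icc (h₂ T) (h₁ T) ⊆ Set.Icc (h₂ T) (h₁ T) := by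
  have hE := expand_above h₁ h₁C lam hlam h₁deriv p hfp
  have hK := contract_below h₂ h₂C lam hlam h₂deriv q hfq
  obtain ⟨hTl, hTr⟩ := hT
  -- t₀ < q, so h₂ t₀ < t₀, i.e. t₀ > 0
  have ht₀q : t₀ < q := by
    by_contra hcon
    push_neg at hcon
    have := h₂mono.le_iff_le.mpr hcon
    rw [hfq, ht₀] at this; linarith
  have ht₀pos : 0 < t₀ := by have := hK t₀ ht₀q; rw [ht₀] at this; exact this
  -- p < t₁, so t₁ < h₁ t₁ = 1
  have hpt₁ : p < t₁ := by
    by_contra hcon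
    push_neg at hcon
    have := h₁mono.le_iff_le.mpr hcon
    rw [hfp, ht₁] at this; linarith
  have ht₁lt1 : t₁ < 1 := by have := hE t₁ hpt₁; rw [ht₁] at this; exact this
  have hTp : p < T := by linarith
  have hTq : T < q := by linarith
  have hT2 : h₂ T < T := hK T hTq
  have hT1 : T < h₁ T := hE T hTp
  refine ⟨hT2, hT1, ?_⟩
  -- h₂ T > 0 > p
  have hh₂Tpos : 0 < h₂ T := by rw [← ht₀]; exact h₂mono hTl
  -- h₁ T < 1 < q
  have hh₁Tlt : h₁ T < 1 := by rw [← ht₁]; exact h₁mono hTr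
  rintro y ⟨x, ⟨hxl, hxr⟩, rfl⟩
  unfold coreMap
  split_ifs with hx
  · constructor
    · refine le_of_lt ?_
      calc h₂ T < h₁ (h₂ T) := hE (h₂ T) (by linarith)
        _ ≤ h₁ x := h₁mono.monotone hxl
    · exact h₁mono.monotone hx
  · push_neg at hx
    constructor
    · exact (h₂mono hx).le
    · refine le_of_lt ?_
      calc h₂ x ≤ h₂ (h₁ T) := h₂mono.monotone hxr
        _ < h₁ T := hK (h₁ T) (by linarith)
end

section
/- Let T ∈ (t₀, t₁) and let I ⊆ [p⁺, q⁺] be an interval with nonempty interior. Then there exist a closed interval H ⊆ I with nonempty interior and m ∈ ℕ such that the m-th iterate φ_T^m restricted to H is continuous and strictly increasing (in particular injective) and T lies in the interior of the image φ_T^m(H). -/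
/-- Mean value estimate: a differentiable map with derivative bounded below by `lam`
expands distances by a factor at least `lam`. -/
lemma mvt_expand (lam : ℝ) (g : ℝ → ℝ) (hg : Differentiable ℝ g)
    (hder : ∀ t, lam ≤ deriv g t) {c d : ℝ} (hcd : c < d) :
    lam * (d - c) ≤ g d - g c := by
  obtain ⟨x, _, hslope⟩ := exists_hasDerivAt_eq_slope g (deriv g) hcd
    hg.continuous.continuousOn (fun x _ => (hg x).hasDerivAt)
  have hle : lam ≤ (g d - g c) / (d - c) := hslope ▸ hder x
  have h1 : lam * (d - c) ≤ ((g d - g c) / (d - c)) * (d - c) :=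
    mul_le_mul_of_nonneg_right hle (by linarith)
  calc lam * (d - c) ≤ ((g d - g c) / (d - c)) * (d - c) := h1
    _ = g d - g c := div_mul_cancel₀ _ (by linarith)

/-- Image of a closed interval under a strictly monotone surjection. -/
lemma image_Icc_of_strictMono (g : ℝ → ℝ) (hmono : StrictMono g)
    (hsurj : Function.Surjective g) (u v : ℝ) :
    g '' Set.Icc u v = Set.Icc (g u) (g v) := by
  have h := (StrictMono.orderIsoOfSurjective g hmono hsurj).image_Icc u v
  simpa [StrictMono.coe_orderIsoOfSurjective] using h

/-- **Claim 5.20.** Under the superposition hypothesis for the expanding maps `h₁, h₂`: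
for `T ∈ (t₀, t₁)` and every interval `I ⊆ [p⁺, q⁺]` with nonempty interior there are a
closed subinterval `H = [c, d] ⊆ I` with nonempty interior and `m ∈ ℕ` such that `φ_T^m`
restricted to `H` is continuous and strictly increasing (hence injective) and `T` lies in
the interior of `φ_T^m(H)`. -/
theorem coreMap_iterate_reaches_T
    (lam : ℝ) (hlam : 1 < lam)
    (h₁ h₂ : ℝ → ℝ)
    (h₁C : ContDiff ℝ 2 h₁) (h₂C : ContDiff ℝ 2 h₂)
    (h₁mono : StrictMono h₁) (h₂mono : StrictMono h₂)
    (h₁bij : Function.Bijective h₁) (h₂bij : Function.Bijective h₂)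
    (h₁deriv : ∀ t, lam ≤ deriv h₁ t) (h₂deriv : ∀ t, lam ≤ deriv h₂ t)
    (p q : ℝ) (hp : p < 0) (hq : 1 < q)
    (hfp : h₁ p = p) (hfq : h₂ q = q)
    (hsup : ∀ t ∈ Set.Icc (0 : ℝ) 1, h₁ t ∈ Set.Ioo (0 : ℝ) 1 ∨ h₂ t ∈ Set.Ioo (0 : ℝ) 1)
    (t₀ t₁ : ℝ) (ht₀ : h₂ t₀ = 0) (ht₁ : h₁ t₁ = 1)
    (T : ℝ) (hT : T ∈ Set.Ioo t₀ t₁)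
    (I : Set ℝ) (hIsub : I ⊆ Set.Icc p q) (hIint : I.OrdConnected)
    (hInonempty : (interior I).Nonempty) :
    ∃ c d : ℝ, c < d ∧ Set.Icc c d ⊆ I ∧
      ∃ m : ℕ,
        ContinuousOn ((coreMap h₁ h₂ T)^[m]) (Set.Icc c d) ∧
        StrictMonoOn ((coreMap h₁ h₂ T)^[m]) (Set.Icc c d) ∧
        T ∈ interior ((coreMap h₁ h₂ T)^[m] '' Set.Icc c d) := by
  set φ := coreMap h₁ h₂ T with hφdef
  have hlam0 : (0:ℝ) < lam := lt_trans one_pos hlam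
  have h₁diff : Differentiable ℝ h₁ := h₁C.differentiable (by norm_num)
  have h₂diff : Differentiable ℝ h₂ := h₂C.differentiable (by norm_num)
  -- the main induction: intervals on one side of `T` eventually reach `T`
  have key : ∀ n : ℕ, ∀ c d : ℝ, c < d → p ≤ c → d ≤ q → (d ≤ T ∨ T < c) →
      q - p < lam ^ n * (d - c) →
      ∃ c' d' : ℝ, c ≤ c' ∧ c' < d' ∧ d' ≤ d ∧
        ∃ m : ℕ, ContinuousOn (φ^[m]) (Set.Icc c' d') ∧
          StrictMonoOn (φ^[m]) (Set.Icc c' d') ∧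
          T ∈ interior (φ^[m] '' Set.Icc c' d') := by
    intro n
    induction n with
    | zero =>
      intro c d hcd hpc hdq _ hlen
      simp only [pow_zero, one_mul] at hlen
      exact absurd hlen (by linarith)
    | succ n IH =>
      intro c d hcd hpc hdq hside hlen
      -- the relevant branch of the core map on `[c, d]`
      obtain ⟨g, hgmono, hgsurj, hgdiff, hgder, hgeq, hga, hgb⟩ :
          ∃ g : ℝ → ℝ, StrictMono g ∧ Function.Surjective g ∧ Differentiable ℝ g ∧
            (∀ t, lam ≤ deriv g t) ∧ (∀ t ∈ Set.Icc c d, φ t = g t) ∧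
            p ≤ g c ∧ g d ≤ q := by
        rcases hside with h | h
        · refine ⟨h₁, h₁mono, h₁bij.2, h₁diff, h₁deriv, ?_, ?_, ?_⟩
          · intro t ht
            simp only [hφdef, coreMap, if_pos (le_trans ht.2 h)]
          · rw [← hfp]; exact h₁mono.monotone hpc
          · have h1 : h₁ d ≤ h₁ T := h₁mono.monotone h
            have h2 : h₁ T < h₁ t₁ := h₁mono hT.2
            rw [ht₁] at h2; linarith
        · refine ⟨h₂, h₂mono, h₂bij.2, h₂diff, h₂deriv, ?_, ?_, ?_⟩
          · intro t ht
            have : ¬ (t ≤ T) := not_le.mpr (lt_of_lt_of_le h ht.1)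
            simp only [hφdef, coreMap, if_neg this]
          · have h1 : h₂ t₀ < h₂ c := h₂mono (lt_trans hT.1 h)
            rw [ht₀] at h1; linarith
          · rw [← hfq]; exact h₂mono.monotone hdq
      have hexp : lam * (d - c) ≤ g d - g c := mvt_expand lam g hgdiff hgder hcd
      have hab : g c < g d := hgmono hcd
      by_cases hTin : g c < T ∧ T < g d
      · -- done in one step
        refine ⟨c, d, le_refl _, hcd, le_refl _, 1, ?_, ?_, ?_⟩
        · simp only [Function.iterate_one]
          exact (hgdiff.continuous.continuousOn).congr hgeq
        · intro x hx y hy hxy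
          simp only [Function.iterate_one]
          rw [hgeq x hx, hgeq y hy]
          exact hgmono hxy
        · simp only [Function.iterate_one]
          rw [Set.image_congr hgeq, image_Icc_of_strictMono g hgmono hgsurj, interior_Icc]
          exact hTin
      · have hlamn : (0:ℝ) < lam ^ n := pow_pos hlam0 n
        have hlen' : q - p < lam ^ n * (g d - g c) := by
          have h1 : lam ^ (n+1) * (d - c) ≤ lam ^ n * (g d - g c) := by
            rw [pow_succ, mul_assoc]
            exact mul_le_mul_of_nonneg_left hexp hlamn.le
          linarith
        -- find a slightly shrunk image interval avoiding `T`
        obtain ⟨A, B, hAB, haA, hBb, hside', hlen''⟩ :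
            ∃ A B : ℝ, A < B ∧ g c ≤ A ∧ B ≤ g d ∧ (B ≤ T ∨ T < A) ∧
              q - p < lam ^ n * (B - A) := by
          rcases le_or_gt (g d) T with h | h
          · exact ⟨g c, g d, hab, le_refl _, le_refl _, Or.inl h, hlen'⟩
          · have hTa : T ≤ g c := by
              by_contra h'
              push_neg at h'
              exact hTin ⟨h', h⟩
            rcases lt_or_eq_of_le hTa with h' | h'
            · exact ⟨g c, g d, hab, le_refl _, le_refl _, Or.inr h', hlen'⟩
            · set δ := (lam ^ n * (g d - g c) - (q - p)) / lam ^ n with hδ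
              have hδpos : 0 < δ := div_pos (by linarith) hlamn
              have hminpos : 0 < min δ (g d - g c) := lt_min hδpos (by linarith)
              have hminle : min δ (g d - g c) ≤ g d - g c := min_le_right _ _
              have hminδ : min δ (g d - g c) ≤ δ := min_le_left _ _
              have hcancel : lam ^ n * δ = lam ^ n * (g d - g c) - (q - p) := by
                rw [hδ]; field_simp
              refine ⟨g c + min δ (g d - g c) / 2, g d, by linarith, by linarith,
                le_refl _, Or.inr (by linarith), ?_⟩
              have h2 : lam ^ n * (min δ (g d - g c) / 2) ≤ lam ^ n * (δ / 2) :=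
                mul_le_mul_of_nonneg_left (by linarith) hlamn.le
              have h3 : lam ^ n * (g d - (g c + min δ (g d - g c) / 2))
                  = lam ^ n * (g d - g c) - lam ^ n * (min δ (g d - g c) / 2) := by ring
              nlinarith
        obtain ⟨c₂, d₂, hAc₂, hc₂d₂, hd₂B, m, hcont, hmono, hTint⟩ :=
          IH A B hAB (le_trans hga haA) (le_trans hBb hgb) hside' hlen''
        obtain ⟨c', hc'⟩ := hgsurj c₂
        obtain ⟨d', hd'⟩ := hgsurj d₂
        have hcc' : c ≤ c' := hgmono.le_iff_le.mp (by rw [hc']; linarith)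
        have hc'd' : c' < d' := hgmono.lt_iff_lt.mp (by rw [hc', hd']; exact hc₂d₂)
        have hd'd : d' ≤ d := hgmono.le_iff_le.mp (by rw [hd']; linarith)
        have hsubcd : Set.Icc c' d' ⊆ Set.Icc c d := Set.Icc_subset_Icc hcc' hd'd
        have hgeq' : ∀ t ∈ Set.Icc c' d', φ t = g t := fun t ht => hgeq t (hsubcd ht)
        have hmaps : Set.MapsTo φ (Set.Icc c' d') (Set.Icc c₂ d₂) := by
          intro t ht
          rw [hgeq' t ht]
          exact ⟨by rw [← hc']; exact hgmono.monotone ht.1,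
            by rw [← hd']; exact hgmono.monotone ht.2⟩
        have hφcont : ContinuousOn φ (Set.Icc c' d') :=
          (hgdiff.continuous.continuousOn).congr hgeq'
        refine ⟨c', d', hcc', hc'd', hd'd, m + 1, ?_, ?_, ?_⟩
        · rw [Function.iterate_succ]
          exact hcont.comp hφcont hmaps
        · intro x hx y hy hxy
          simp only [Function.iterate_succ_apply]
          refine hmono (hmaps hx) (hmaps hy) ?_
          rw [hgeq' x hx, hgeq' y hy]
          exact hgmono hxy
        · rw [Function.iterate_succ, Set.image_comp]
          have himg : φ '' Set.Icc c' d' = Set.Icc c₂ d₂ := by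
            rw [Set.image_congr hgeq', image_Icc_of_strictMono g hgmono hgsurj, hc', hd']
          rw [himg]
          exact hTint
  -- set up the initial interval inside `I`, on one side of `T`
  obtain ⟨x, hx⟩ := hInonempty
  obtain ⟨ε, hε, hball⟩ : ∃ ε > 0, Set.Ioo (x - ε) (x + ε) ⊆ I := by
    obtain ⟨ε, hε, h⟩ := Metric.mem_nhds_iff.mp (mem_interior_iff_mem_nhds.mp hx)
    exact ⟨ε, hε, by rw [← Real.ball_eq_Ioo]; exact h⟩
  obtain ⟨c, d, hcd, hsubI', hside⟩ :
      ∃ c d : ℝ, c < d ∧ Set.Icc c d ⊆ I ∧ (d ≤ T ∨ T < c) := by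
    rcases lt_or_ge x T with h | h
    · exact ⟨x - ε/2, x, by linarith,
        fun t ht => hball ⟨by linarith [ht.1], by linarith [ht.2]⟩, Or.inl h.le⟩
    · exact ⟨x + ε/4, x + ε/2, by linarith,
        fun t ht => hball ⟨by linarith [ht.1], by linarith [ht.2]⟩,
        Or.inr (by linarith)⟩
  have hpc : p ≤ c := (hIsub (hsubI' ⟨le_refl c, hcd.le⟩)).1
  have hdq : d ≤ q := (hIsub (hsubI' ⟨hcd.le, le_refl d⟩)).2
  obtain ⟨n, hn⟩ : ∃ n : ℕ, q - p < lam ^ n * (d - c) := by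
    obtain ⟨n, hn⟩ := pow_unbounded_of_one_lt ((q - p)/(d - c)) hlam
    refine ⟨n, ?_⟩
    rw [div_lt_iff₀ (by linarith)] at hn
    linarith
  obtain ⟨c', d', hcc', hc'd', hd'd, m, h1, h2, h3⟩ := key n c d hcd hpc hdq hside hn
  exact ⟨c', d', hc'd', (Set.Icc_subset_Icc hcc' hd'd).trans hsubI', m, h1, h2, h3⟩
end

section
/- Let T ∈ (t₀, t₁). Then the set of points t ∈ [p⁺, q⁺] for which there exists n₀ ∈ ℕ with φ_T^n(t) ∈ [h₂(T), h₁(T)] for every n ≥ n₀ contains a subset that is open and dense in [p⁺, q⁺] (with the subspace topology). -/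
/-- **Claim 5.23.** Under the superposition hypothesis for the expanding maps `h₁, h₂`:
for `T ∈ (t₀, t₁)`, the set of points `t ∈ [p⁺, q⁺]` whose `φ_T`-orbit eventually stays in
`[h₂(T), h₁(T)]` contains a subset that is open and dense in `[p⁺, q⁺]` (for the subspace
topology): it contains `V ∩ [p⁺, q⁺]` for some open `V ⊆ ℝ` with
`[p⁺, q⁺] ⊆ closure (V ∩ [p⁺, q⁺])`. -/
theorem coreMap_eventually_trapped_open_dense
    (lam : ℝ) (hlam : 1 < lam)
    (h₁ h₂ : ℝ → ℝ)
    (h₁C : ContDiff ℝ 2 h₁) (h₂C : ContDiff ℝ 2 h₂)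
    (h₁mono : StrictMono h₁) (h₂mono : StrictMono h₂)
    (h₁bij : Function.Bijective h₁) (h₂bij : Function.Bijective h₂)
    (h₁deriv : ∀ t, lam ≤ deriv h₁ t) (h₂deriv : ∀ t, lam ≤ deriv h₂ t)
    (p q : ℝ) (hp : p < 0) (hq : 1 < q)
    (hfp : h₁ p = p) (hfq : h₂ q = q)
    (hsup : ∀ t ∈ Set.Icc (0 : ℝ) 1, h₁ t ∈ Set.Ioo (0 : ℝ) 1 ∨ h₂ t ∈ Set.Ioo (0 : ℝ) 1)
    (t₀ t₁ : ℝ) (ht₀ : h₂ t₀ = 0) (ht₁ : h₁ t₁ = 1)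
    (T : ℝ) (hT : T ∈ Set.Ioo t₀ t₁) :
    ∃ V : Set ℝ, IsOpen V ∧
      Set.Icc p q ⊆ closure (V ∩ Set.Icc p q) ∧
      V ∩ Set.Icc p q ⊆
        {t | ∃ n₀ : ℕ, ∀ n ≥ n₀, (coreMap h₁ h₂ T)^[n] t ∈ Set.Icc (h₂ T) (h₁ T)} := by
  have h₁d : Differentiable ℝ h₁ := h₁C.differentiable (by norm_num)
  have h₂d : Differentiable ℝ h₂ := h₂C.differentiable (by norm_num)
  -- Expansion estimate from the derivative bound.
  have expand : ∀ (h : ℝ → ℝ), Differentiable ℝ h → (∀ t, lam ≤ deriv h t) →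
      ∀ s t : ℝ, s ≤ t → lam * (t - s) ≤ h t - h s := by
    intro h hd hder s t hst
    have gmono : Monotone (fun x => h x - lam * x) := by
      apply monotone_of_deriv_nonneg
      · exact hd.sub (differentiable_id.const_mul lam)
      · intro x
        have hda : HasDerivAt (fun x => h x - lam * x) (deriv h x - lam * 1) x :=
          (hd x).hasDerivAt.sub ((hasDerivAt_id x).const_mul lam)
        rw [hda.deriv]
        linarith [hder x]
    have hg := gmono hst
    simp only at hg
    nlinarith
  have E1 : ∀ s t : ℝ, s ≤ t → lam * (t - s) ≤ h₁ t - h₁ s := expand h₁ h₁d h₁deriv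
  have E2 : ∀ s t : ℝ, s ≤ t → lam * (t - s) ≤ h₂ t - h₂ s := expand h₂ h₂d h₂deriv
  have h₁gt : ∀ t, p < t → t < h₁ t := by
    intro t ht
    have := E1 p t ht.le
    rw [hfp] at this
    nlinarith
  have h₂lt : ∀ t, t < q → h₂ t < t := by
    intro t ht
    have := E2 t q ht.le
    rw [hfq] at this
    nlinarith
  obtain ⟨hT0, hT1⟩ := hT
  -- ordering facts
  have ht₀pos : (0 : ℝ) < t₀ := by
    have h20 : h₂ 0 < 0 := by
      have := E2 0 q (by linarith)
      rw [hfq] at this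
      nlinarith
    have : h₂ 0 < h₂ t₀ := by rw [ht₀]; exact h20
    exact h₂mono.lt_iff_lt.mp this
  have ht₁lt1 : t₁ < 1 := by
    have h11 : 1 < h₁ 1 := by
      have := E1 p 1 (by linarith)
      rw [hfp] at this
      nlinarith
    have : h₁ t₁ < h₁ 1 := by rw [ht₁]; exact h11
    exact h₁mono.lt_iff_lt.mp this
  have hTpos : 0 < T := lt_trans ht₀pos hT0
  have hTlt1 : T < 1 := lt_trans hT1 ht₁lt1
  have hpT : p < T := by linarith
  have hTq : T < q := by linarith
  have hapos : 0 < h₂ T := by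
    have : h₂ t₀ < h₂ T := h₂mono hT0
    rwa [ht₀] at this
  have haT : h₂ T < T := h₂lt T hTq
  have hTb : T < h₁ T := h₁gt T hpT
  have hb1 : h₁ T < 1 := by
    have : h₁ T < h₁ t₁ := h₁mono hT1
    rwa [ht₁] at this
  set a := h₂ T with ha
  set b := h₁ T with hb
  set φ := coreMap h₁ h₂ T with hφ
  -- The trap [a,b] is forward invariant.
  have inv : ∀ x ∈ Set.Icc a b, φ x ∈ Set.Icc a b := by
    rintro x ⟨hax, hxb⟩
    by_cases hxT : x ≤ T
    · rw [show φ x = h₁ x from if_pos hxT]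
      refine ⟨le_of_lt (lt_of_le_of_lt hax (h₁gt x (by linarith))), h₁mono.monotone hxT⟩
    · push_neg at hxT
      rw [show φ x = h₂ x from if_neg (not_le.mpr hxT)]
      exact ⟨le_of_lt (h₂mono hxT), le_of_lt (lt_of_lt_of_le (h₂lt x (by linarith)) hxb)⟩
  have invIter : ∀ n : ℕ, ∀ x ∈ Set.Icc a b, φ^[n] x ∈ Set.Icc a b := by
    intro n
    induction n with
    | zero => intro x hx; simpa using hx
    | succ n ih =>
      intro x hx
      rw [Function.iterate_succ_apply]
      exact ih _ (inv x hx)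
  -- Points left of the trap eventually enter it.
  have left : ∀ n : ℕ, ∀ t, p < t → t < a → a - p ≤ lam ^ n * (t - p) →
      ∃ m, φ^[m] t ∈ Set.Icc a b := by
    intro n
    induction n with
    | zero => intro t hpt hta hle; rw [pow_zero, one_mul] at hle; linarith
    | succ n ih =>
      intro t hpt hta hle
      have htT : t ≤ T := by linarith
      have hstep : φ t = h₁ t := if_pos htT
      have hlt : t < h₁ t := h₁gt t hpt
      have hlb : h₁ t < b := h₁mono (by linarith : t < T)
      by_cases hha : a ≤ h₁ t
      · exact ⟨1, by rw [Function.iterate_one, hstep]; exact ⟨hha, hlb.le⟩⟩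
      · push_neg at hha
        have hgrow : lam * (t - p) ≤ h₁ t - p := by
          have := E1 p t hpt.le; rw [hfp] at this; linarith
        have hrec : a - p ≤ lam ^ n * (h₁ t - p) := by
          calc a - p ≤ lam ^ (n + 1) * (t - p) := hle
            _ = lam ^ n * (lam * (t - p)) := by ring
            _ ≤ lam ^ n * (h₁ t - p) :=
                mul_le_mul_of_nonneg_left hgrow (pow_nonneg (by linarith) n)
        obtain ⟨m, hm⟩ := ih (h₁ t) (by linarith) hha hrec
        exact ⟨m + 1, by rwa [Function.iterate_succ_apply, hstep]⟩
  -- Points right of the trap eventually enter it.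
  have right : ∀ n : ℕ, ∀ t, b < t → t < q → q - b ≤ lam ^ n * (q - t) →
      ∃ m, φ^[m] t ∈ Set.Icc a b := by
    intro n
    induction n with
    | zero => intro t hbt htq hle; rw [pow_zero, one_mul] at hle; linarith
    | succ n ih =>
      intro t hbt htq hle
      have hTt : T < t := by linarith
      have hstep : φ t = h₂ t := if_neg (not_le.mpr hTt)
      have hlt : h₂ t < t := h₂lt t htq
      have hla : a < h₂ t := h₂mono hTt
      by_cases hhb : h₂ t ≤ b
      · exact ⟨1, by rw [Function.iterate_one, hstep]; exact ⟨hla.le, hhb⟩⟩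
      · push_neg at hhb
        have hgrow : lam * (q - t) ≤ q - h₂ t := by
          have := E2 t q htq.le; rw [hfq] at this; linarith
        have hrec : q - b ≤ lam ^ n * (q - h₂ t) := by
          calc q - b ≤ lam ^ (n + 1) * (q - t) := hle
            _ = lam ^ n * (lam * (q - t)) := by ring
            _ ≤ lam ^ n * (q - h₂ t) :=
                mul_le_mul_of_nonneg_left hgrow (pow_nonneg (by linarith) n)
        obtain ⟨m, hm⟩ := ih (h₂ t) hhb (by linarith) hrec
        exact ⟨m + 1, by rwa [Function.iterate_succ_apply, hstep]⟩
  -- Every point of (p, q) eventually enters the trap.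
  have good : ∀ t ∈ Set.Ioo p q, ∃ m, φ^[m] t ∈ Set.Icc a b := by
    rintro t ⟨hpt, htq⟩
    rcases lt_or_ge t a with hlt | hge
    · obtain ⟨n, hn⟩ : ∃ n : ℕ, (a - p) / (t - p) < lam ^ n :=
        pow_unbounded_of_one_lt _ hlam
      refine left n t hpt hlt ?_
      rw [div_lt_iff₀ (by linarith : (0:ℝ) < t - p)] at hn
      linarith
    rcases le_or_gt t b with hle | hgt
    · exact ⟨0, hge, hle⟩
    · obtain ⟨n, hn⟩ : ∃ n : ℕ, (q - b) / (q - t) < lam ^ n :=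
        pow_unbounded_of_one_lt _ hlam
      refine right n t hgt htq ?_
      rw [div_lt_iff₀ (by linarith : (0:ℝ) < q - t)] at hn
      linarith
  refine ⟨Set.Ioo p q, isOpen_Ioo, ?_, ?_⟩
  · rw [Set.inter_eq_left.mpr Set.Ioo_subset_Icc_self,
      closure_Ioo (by linarith : p ≠ q)]
  · rintro t ⟨ht, -⟩
    obtain ⟨m, hm⟩ := good t ht
    refine ⟨m, fun n hn => ?_⟩
    obtain ⟨k, rfl⟩ := Nat.exists_eq_add_of_le hn
    rw [Nat.add_comm, Function.iterate_add_apply]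
    exact invIter k _ hm
end

section
/- For all T₁, T₂ ∈ (t₀, t₁) with T₁ ≠ T₂ and all measures μ₁ ∈ M_eqLeb(φ_{T₁}) and μ₂ ∈ M_eqLeb(φ_{T₂}), one has μ₁ ≠ μ₂. -/
open MeasureTheory

/-- `M_eqLeb(φ)`: the set of `φ`-invariant ergodic Borel probability measures on `ℝ` that
are mutually absolutely continuous with Lebesgue measure in restriction to some nonempty
open interval. -/
def MeqLeb (φ : ℝ → ℝ) : Set (Measure ℝ) :=
  {μ | IsProbabilityMeasure μ ∧ Ergodic φ μ ∧
    ∃ a b : ℝ, a < b ∧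
      μ.restrict (Set.Ioo a b) ≪ volume.restrict (Set.Ioo a b) ∧
      volume.restrict (Set.Ioo a b) ≪ μ.restrict (Set.Ioo a b)}

/-!
Suppose `μ` is invariant under both `φ_{T₁}` and `φ_{T₂}` with `T₁ < T₂`. The two invariance
equations differ only on `(T₁, T₂]`, so the restriction `ν` of `μ` to `(T₁, T₂]` has the same
image under `h₁` and under `h₂`; hence `ν` is invariant under `g = h₁⁻¹ ∘ h₂`, that is
`ν (-∞, g y] = ν (-∞, y]`. As `g y < y` on `[T₁, T₂]`, some iterate of `g` pushes `T₂` below `T₁`,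
so `μ (T₁, T₂] = ν (-∞, T₂] = 0`.

Outside this gap invariance yields `μ I ≤ μ (h₁ I)` for intervals `I ⊆ (-∞, T₁]` and
`μ I ≤ μ (h₂ I)` for `I ⊆ [T₂, ∞)`, and both maps stretch intervals by the factor `λ`. Take an
interval on which `μ` charges every open subinterval (absolute continuity of Lebesgue measure
provides one). Inside `[p, q]` it can be expanded forever without leaving `[p, q]` or meeting
the null gap, which is absurd. Left of `p` (right of `q`) its images run off to `-∞` (`+∞`) without losing mass,
which contradicts the finiteness of `μ`.
-/

open Set
open scoped ENNReal

def IsExpanding (lam : ℝ) (f : ℝ → ℝ) : Prop :=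
  ∀ ⦃x y : ℝ⦄, x ≤ y → lam * (y - x) ≤ f y - f x

namespace IsExpanding

variable {lam p y : ℝ} {f : ℝ → ℝ}

lemma self_lt_apply (hf : IsExpanding lam f) (hlam : 1 < lam) (hp : f p = p) (hy : p < y) :
    y < f y := by
  have := hf hy.le
  rw [hp] at this
  nlinarith

lemma apply_lt_self (hf : IsExpanding lam f) (hlam : 1 < lam) (hp : f p = p) (hy : y < p) :
    f y < y := by
  have := hf hy.le
  rw [hp] at this
  nlinarith

end IsExpanding

lemma not_bddAbove_of_forall_exists_mul_le {α : Type*} {P : α → Prop} {ℓ : α → ℝ} {lam : ℝ}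
    (hlam : 1 < lam) (hstep : ∀ x, P x → ∃ y, P y ∧ lam * ℓ x ≤ ℓ y)
    {x₀ : α} (hx₀ : P x₀) (hpos : 0 < ℓ x₀) : ¬ BddAbove (ℓ '' {x | P x}) := by
  have hiter : ∀ n : ℕ, ∃ y, P y ∧ lam ^ n * ℓ x₀ ≤ ℓ y := by
    intro n
    induction n with
    | zero => exact ⟨x₀, hx₀, by simp⟩
    | succ n ih =>
      obtain ⟨y, hy, hle⟩ := ih
      obtain ⟨z, hz, hyz⟩ := hstep y hy
      refine ⟨z, hz, ?_⟩
      calc lam ^ (n + 1) * ℓ x₀ = lam * (lam ^ n * ℓ x₀) := by ring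
        _ ≤ lam * ℓ y := by gcongr
        _ ≤ ℓ z := hyz
  rintro ⟨K, hK⟩
  obtain ⟨n, hn⟩ := pow_unbounded_of_one_lt (K / ℓ x₀) hlam
  obtain ⟨y, hy, hle⟩ := hiter n
  have hyK := hK (mem_image_of_mem ℓ hy)
  rw [div_lt_iff₀ hpos] at hn
  linarith

lemma exists_iterate_lt_of_forall_lt_self {f : ℝ → ℝ} (hf : Continuous f) {a b : ℝ}
    (hlt : ∀ y ∈ Icc a b, f y < y) : ∃ n, f^[n] b < a := by
  by_contra! hge
  have hmem : ∀ n, f^[n] b ∈ Icc a b := by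
    intro n
    induction n with
    | zero => exact ⟨hge 0, le_rfl⟩
    | succ n ih =>
      refine ⟨hge (n + 1), ?_⟩
      rw [Function.iterate_succ_apply']
      exact (hlt _ ih).le.trans ih.2
  have hanti : Antitone fun n => f^[n] b := antitone_nat_of_succ_le fun n => by
    rw [Function.iterate_succ_apply']
    exact (hlt _ (hmem n)).le
  have hlim := tendsto_atTop_ciInf hanti ⟨a, by rintro _ ⟨n, rfl⟩; exact (hmem n).1⟩
  have hL : (⨅ n, f^[n] b) ∈ Icc a b :=
    ⟨ge_of_tendsto' hlim fun n => (hmem n).1, le_of_tendsto' hlim fun n => (hmem n).2⟩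
  exact (hlt _ hL).ne (isFixedPt_of_tendsto_iterate hlim hf.continuousAt)

lemma exists_measure_Iic_lt (μ : Measure ℝ) [IsFiniteMeasure μ] {ε : ℝ≥0∞} (hε : 0 < ε) :
    ∃ x, μ (Iic x) < ε := by
  have hempty : ⋂ x : ℝ, Iic (-x) = ∅ :=
    eq_empty_of_forall_notMem fun y hy => by linarith [mem_Iic.1 (mem_iInter.1 hy (1 - y))]
  have h := tendsto_measure_iInter_atTop (μ := μ) (fun _ => measurableSet_Iic.nullMeasurableSet)
    (fun _ _ hxy => Iic_subset_Iic.2 (neg_le_neg hxy)) ⟨0, measure_ne_top μ _⟩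
  rw [hempty, measure_empty] at h
  obtain ⟨x, hx⟩ := (h.eventually (gt_mem_nhds hε)).exists
  exact ⟨-x, hx⟩

lemma exists_measure_Ici_lt (μ : Measure ℝ) [IsFiniteMeasure μ] {ε : ℝ≥0∞} (hε : 0 < ε) :
    ∃ x, μ (Ici x) < ε := by
  have hempty : ⋂ x : ℝ, Ici x = ∅ :=
    eq_empty_of_forall_notMem fun y hy => by linarith [mem_Ici.1 (mem_iInter.1 hy (y + 1))]
  have h := tendsto_measure_iInter_atTop (μ := μ) (fun _ => measurableSet_Ici.nullMeasurableSet)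
    (fun _ _ hxy => Ici_subset_Ici.2 hxy) ⟨0, measure_ne_top μ _⟩
  rw [hempty, measure_empty] at h
  exact (h.eventually (gt_mem_nhds hε)).exists

def ChargesIoo (μ : Measure ℝ) (c d : ℝ) : Prop :=
  ∀ u v, c ≤ u → u < v → v ≤ d → 0 < μ (Ioo u v)

lemma chargesIoo_of_absolutelyContinuous {μ : Measure ℝ} {a b : ℝ}
    (h : volume.restrict (Ioo a b) ≪ μ.restrict (Ioo a b)) : ChargesIoo μ a b := by
  intro u v hau huv hvb
  have hsub : Ioo u v ⊆ Ioo a b := Ioo_subset_Ioo hau hvb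
  refine pos_iff_ne_zero.2 fun h0 => ?_
  have hvol := h (by rwa [Measure.restrict_eq_self μ hsub])
  rw [Measure.restrict_eq_self volume hsub, Real.volume_Ioo, ENNReal.ofReal_eq_zero] at hvol
  linarith

lemma ChargesIoo.mono {μ : Measure ℝ} {c d c' d' : ℝ} (h : ChargesIoo μ c d) (hc : c ≤ c')
    (hd : d' ≤ d) : ChargesIoo μ c' d' :=
  fun u v hu huv hv => h u v (hc.trans hu) huv (hv.trans hd)

lemma ChargesIoo.orderIso {μ : Measure ℝ} {c d : ℝ} (h : ChargesIoo μ c d) (e : ℝ ≃o ℝ)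
    (hle : ∀ u v, c ≤ u → v ≤ d → μ (Ioo u v) ≤ μ (Ioo (e u) (e v))) :
    ChargesIoo μ (e c) (e d) := by
  intro u v hu huv hv
  have hu' : c ≤ e.symm u := e.le_symm_apply.2 hu
  have hv' : e.symm v ≤ d := e.symm_apply_le.2 hv
  calc 0 < μ (Ioo (e.symm u) (e.symm v)) := h _ _ hu' (e.symm.strictMono huv) hv'
    _ ≤ μ (Ioo u v) := by simpa using hle _ _ hu' hv'

lemma measure_Ioo_le_of_map_restrict_le {μ : Measure ℝ} {s : Set ℝ} {e : ℝ ≃o ℝ}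
    (h : (μ.restrict s).map e ≤ μ) {u v : ℝ} (hs : Ioo u v ⊆ s) :
    μ (Ioo u v) ≤ μ (Ioo (e u) (e v)) :=
  calc μ (Ioo u v) = (μ.restrict s).map e (Ioo (e u) (e v)) := by
        rw [Measure.map_apply e.continuous.measurable measurableSet_Ioo, e.preimage_Ioo,
          e.symm_apply_apply, e.symm_apply_apply, Measure.restrict_eq_self μ hs]
    _ ≤ μ (Ioo (e u) (e v)) := Measure.le_iff'.1 h _

lemma measure_Iic_iterate_of_map_eq {ν : Measure ℝ} {g : ℝ ≃o ℝ} (hg : ν.map g = ν) (y : ℝ) :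
    ∀ n, ν (Iic (g^[n] y)) = ν (Iic y)
  | 0 => rfl
  | n + 1 => by
    rw [Function.iterate_succ_apply', ← measure_Iic_iterate_of_map_eq hg y n]
    conv_lhs => rw [← hg]
    rw [Measure.map_apply g.continuous.measurable measurableSet_Iic, g.preimage_Iic,
      g.symm_apply_apply]

lemma measure_Iic_le_of_map_eq {ν : Measure ℝ} {g : ℝ ≃o ℝ} (hg : ν.map g = ν) {a b : ℝ}
    (hlt : ∀ y ∈ Icc a b, g y < y) : ν (Iic b) ≤ ν (Iic a) := by
  obtain ⟨n, hn⟩ := exists_iterate_lt_of_forall_lt_self g.continuous hlt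
  rw [← measure_Iic_iterate_of_map_eq hg b n]
  exact measure_mono (Iic_subset_Iic.2 hn.le)

section CoreMap

variable {h₁ h₂ : ℝ → ℝ} {μ : Measure ℝ} {T T₁ T₂ : ℝ}

lemma coreMap_preimage (A : Set ℝ) :
    coreMap h₁ h₂ T ⁻¹' A = (h₁ ⁻¹' A ∩ Iic T) ∪ (h₂ ⁻¹' A ∩ Ioi T) := by
  ext t
  by_cases h : t ≤ T
  · simp [coreMap, h, not_lt.2 h]
  · simp [coreMap, h, not_le.1 h]

lemma map_coreMap (hm₁ : Measurable h₁) (hm₂ : Measurable h₂) :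
    μ.map (coreMap h₁ h₂ T) = (μ.restrict (Iic T)).map h₁ + (μ.restrict (Ioi T)).map h₂ := by
  ext s hs
  have hm : Measurable (coreMap h₁ h₂ T) := Measurable.ite measurableSet_Iic hm₁ hm₂
  rw [Measure.map_apply hm hs, Measure.add_apply, Measure.map_apply hm₁ hs,
    Measure.map_apply hm₂ hs, Measure.restrict_apply (hm₁ hs), Measure.restrict_apply (hm₂ hs),
    coreMap_preimage, measure_union
      ((Iic_disjoint_Ioi le_rfl).mono inter_subset_right inter_subset_right)
      ((hm₂ hs).inter measurableSet_Ioi)]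

lemma map_restrict_Iic_le (hm₁ : Measurable h₁) (hm₂ : Measurable h₂)
    (hφ : μ.map (coreMap h₁ h₂ T) = μ) : (μ.restrict (Iic T)).map h₁ ≤ μ := by
  conv_rhs => rw [← hφ, map_coreMap hm₁ hm₂]
  exact Measure.le_add_right le_rfl

lemma map_restrict_Ioi_le (hm₁ : Measurable h₁) (hm₂ : Measurable h₂)
    (hφ : μ.map (coreMap h₁ h₂ T) = μ) : (μ.restrict (Ioi T)).map h₂ ≤ μ := by
  conv_rhs => rw [← hφ, map_coreMap hm₁ hm₂]
  exact Measure.le_add_left le_rfl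

lemma map_restrict_Ioc_eq [IsFiniteMeasure μ] (hm₁ : Measurable h₁) (hm₂ : Measurable h₂)
    (hT : T₁ ≤ T₂) (hφ₁ : μ.map (coreMap h₁ h₂ T₁) = μ) (hφ₂ : μ.map (coreMap h₁ h₂ T₂) = μ) :
    (μ.restrict (Ioc T₁ T₂)).map h₂ = (μ.restrict (Ioc T₁ T₂)).map h₁ := by
  have hIic : μ.restrict (Iic T₂) = μ.restrict (Iic T₁) + μ.restrict (Ioc T₁ T₂) := by
    rw [← Measure.restrict_union (Iic_disjoint_Ioc le_rfl) measurableSet_Ioc,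
      Iic_union_Ioc_eq_Iic hT]
  have hIoi : μ.restrict (Ioi T₁) = μ.restrict (Ioc T₁ T₂) + μ.restrict (Ioi T₂) := by
    rw [← Measure.restrict_union (Ioc_disjoint_Ioi le_rfl) measurableSet_Ioi,
      Ioc_union_Ioi_eq_Ioi hT]
  have h := hφ₁.trans hφ₂.symm
  rw [map_coreMap hm₁ hm₂, map_coreMap hm₁ hm₂, hIic, hIoi, Measure.map_add _ _ hm₁,
    Measure.map_add _ _ hm₂] at h
  ext s hs
  have hs := congrArg (· s) h
  simp only [Measure.add_apply] at hs
  rw [← add_assoc] at hs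
  exact (ENNReal.add_right_inj (measure_ne_top _ _)).1
    ((ENNReal.add_left_inj (measure_ne_top _ _)).1 hs)

lemma measure_Ioc_eq_zero_of_map_coreMap_eq [IsFiniteMeasure μ] {e₁ e₂ : ℝ ≃o ℝ}
    (hT : T₁ ≤ T₂) (hφ₁ : μ.map (coreMap e₁ e₂ T₁) = μ) (hφ₂ : μ.map (coreMap e₁ e₂ T₂) = μ)
    (hgap : ∀ y ∈ Icc T₁ T₂, e₂ y < e₁ y) : μ (Ioc T₁ T₂) = 0 := by
  set ν := μ.restrict (Ioc T₁ T₂)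
  have hm₁ := e₁.continuous.measurable
  have hm₁' := e₁.symm.continuous.measurable
  have hm₂ := e₂.continuous.measurable
  have hν : ν.map (e₂.trans e₁.symm) = ν := by
    calc ν.map (e₂.trans e₁.symm) = (ν.map e₂).map e₁.symm := (Measure.map_map hm₁' hm₂).symm
      _ = (ν.map e₁).map e₁.symm := by rw [map_restrict_Ioc_eq hm₁ hm₂ hT hφ₁ hφ₂]
      _ = ν := by
        rw [Measure.map_map hm₁' hm₁,
          show ⇑e₁.symm ∘ ⇑e₁ = id from funext e₁.symm_apply_apply, Measure.map_id]
  have h := measure_Iic_le_of_map_eq hν fun y hy => e₁.symm_apply_lt.2 (hgap y hy)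
  rwa [Measure.restrict_apply measurableSet_Iic, Measure.restrict_apply measurableSet_Iic,
    Iic_inter_Ioc_of_le le_rfl, (Iic_disjoint_Ioc le_rfl).inter_eq, measure_empty,
    nonpos_iff_eq_zero] at h

end CoreMap

section Expansion

variable {lam p q T₁ T₂ : ℝ} {μ : Measure ℝ}

lemma measure_Ioo_eq_zero_of_lt_fixedPt [IsFiniteMeasure μ] {e : ℝ ≃o ℝ} (hlam : 1 < lam)
    (hexp : IsExpanding lam e) (hp : e p = p)
    (hle : ∀ u v, v ≤ p → μ (Ioo u v) ≤ μ (Ioo (e u) (e v))) {c d : ℝ} (hd : d < p) :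
    μ (Ioo c d) = 0 := by
  by_contra hne
  obtain ⟨x₀, hx₀⟩ := exists_measure_Iic_lt μ (pos_iff_ne_zero.2 hne)
  refine not_bddAbove_of_forall_exists_mul_le hlam (x₀ := (c, d)) (ℓ := fun I => p - I.2)
    (P := fun I => I.2 < p ∧ μ (Ioo c d) ≤ μ (Ioo I.1 I.2)) ?_ ⟨hd, le_rfl⟩ (sub_pos.2 hd)
    ⟨p - x₀, ?_⟩
  · rintro ⟨u, v⟩ ⟨hv, hmass⟩
    refine ⟨(e u, e v), ⟨hp ▸ e.strictMono hv, hmass.trans (hle u v hv.le)⟩, ?_⟩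
    simpa [hp] using hexp hv.le
  · rintro _ ⟨⟨u, v⟩, ⟨-, hmass⟩, rfl⟩
    have hx₀v : x₀ < v := lt_of_not_ge fun hv =>
      (hmass.trans (measure_mono (fun _ hy => le_trans hy.2.le hv))).not_gt hx₀
    simp only
    linarith

lemma measure_Ioo_eq_zero_of_fixedPt_lt [IsFiniteMeasure μ] {e : ℝ ≃o ℝ} (hlam : 1 < lam)
    (hexp : IsExpanding lam e) (hq : e q = q)
    (hle : ∀ u v, q ≤ u → μ (Ioo u v) ≤ μ (Ioo (e u) (e v))) {c d : ℝ} (hc : q < c) :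
    μ (Ioo c d) = 0 := by
  by_contra hne
  obtain ⟨x₀, hx₀⟩ := exists_measure_Ici_lt μ (pos_iff_ne_zero.2 hne)
  refine not_bddAbove_of_forall_exists_mul_le hlam (x₀ := (c, d)) (ℓ := fun I => I.1 - q)
    (P := fun I => q < I.1 ∧ μ (Ioo c d) ≤ μ (Ioo I.1 I.2)) ?_ ⟨hc, le_rfl⟩ (sub_pos.2 hc)
    ⟨x₀ - q, ?_⟩
  · rintro ⟨u, v⟩ ⟨hu, hmass⟩
    refine ⟨(e u, e v), ⟨hq ▸ e.strictMono hu, hmass.trans (hle u v hu.le)⟩, ?_⟩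
    simpa [hq] using hexp hu.le
  · rintro _ ⟨⟨u, v⟩, ⟨-, hmass⟩, rfl⟩
    have hux₀ : u < x₀ := lt_of_not_ge fun hu =>
      (hmass.trans (measure_mono (fun _ hy => le_trans hu hy.1.le))).not_gt hx₀
    simp only
    linarith

lemma not_chargesIoo_of_measure_Ioo_eq_zero {e₁ e₂ : ℝ ≃o ℝ} (hlam : 1 < lam)
    (hexp₁ : IsExpanding lam e₁) (hexp₂ : IsExpanding lam e₂) (hp : e₁ p = p) (hq : e₂ q = q)
    (hT : T₁ < T₂) (he₁T : e₁ T₁ ≤ q) (he₂T : p ≤ e₂ T₂) (hJ : μ (Ioo T₁ T₂) = 0)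
    (hle₁ : ∀ u v, v ≤ T₁ → μ (Ioo u v) ≤ μ (Ioo (e₁ u) (e₁ v)))
    (hle₂ : ∀ u v, T₂ ≤ u → μ (Ioo u v) ≤ μ (Ioo (e₂ u) (e₂ v)))
    {c d : ℝ} (hpc : p ≤ c) (hcd : c < d) (hdq : d ≤ q) : ¬ ChargesIoo μ c d := by
  intro hμ
  refine not_bddAbove_of_forall_exists_mul_le hlam (x₀ := (c, d)) (ℓ := fun I => I.2 - I.1)
    (P := fun I => p ≤ I.1 ∧ I.1 < I.2 ∧ I.2 ≤ q ∧ ChargesIoo μ I.1 I.2) ?_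
    ⟨hpc, hcd, hdq, hμ⟩ (sub_pos.2 hcd) ⟨q - p, ?_⟩
  · rintro ⟨u, v⟩ ⟨hpu, huv, hvq, hμuv⟩
    rcases le_or_gt v T₁ with hvT | hTv
    · refine ⟨(e₁ u, e₁ v), ⟨hp ▸ e₁.monotone hpu, e₁.strictMono huv,
        (e₁.monotone hvT).trans he₁T,
        hμuv.orderIso e₁ fun u' v' _ hv' => hle₁ u' v' (hv'.trans hvT)⟩, hexp₁ huv.le⟩
    rcases le_or_gt T₂ u with hTu | huT
    · refine ⟨(e₂ u, e₂ v), ⟨he₂T.trans (e₂.monotone hTu), e₂.strictMono huv,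
        hq ▸ e₂.monotone hvq,
        hμuv.orderIso e₂ fun u' v' hu' _ => hle₂ u' v' (hTu.trans hu')⟩, hexp₂ huv.le⟩
    -- `(u, v)` meets the null gap `(T₁, T₂)` in a nondegenerate interval
    have hgap : max u T₁ < min v T₂ := max_lt (lt_min huv huT) (lt_min hTv hT)
    exact absurd (measure_mono_null (Ioo_subset_Ioo (le_max_right u T₁) (min_le_right v T₂)) hJ)
      (hμuv _ _ (le_max_left u T₁) hgap (min_le_left v T₂)).ne'
  · rintro _ ⟨⟨u, v⟩, ⟨hpu, -, hvq, -⟩, rfl⟩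
    simp only
    linarith

lemma not_chargesIoo_of_map_coreMap_eq [IsFiniteMeasure μ] {e₁ e₂ : ℝ ≃o ℝ} (hlam : 1 < lam)
    (hexp₁ : IsExpanding lam e₁) (hexp₂ : IsExpanding lam e₂) (hp : e₁ p = p) (hq : e₂ q = q)
    (hpT : p < T₁) (hT : T₁ < T₂) (hTq : T₂ < q) (he₁T : e₁ T₁ ≤ q) (he₂T : p ≤ e₂ T₂)
    (hφ₁ : μ.map (coreMap e₁ e₂ T₁) = μ) (hφ₂ : μ.map (coreMap e₁ e₂ T₂) = μ)
    {a b : ℝ} (hab : a < b) : ¬ ChargesIoo μ a b := by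
  have hm₁ := e₁.continuous.measurable
  have hm₂ := e₂.continuous.measurable
  have hJ : μ (Ioo T₁ T₂) = 0 := by
    refine measure_mono_null Ioo_subset_Ioc_self
      (measure_Ioc_eq_zero_of_map_coreMap_eq hT.le hφ₁ hφ₂ fun y hy => ?_)
    exact (hexp₂.apply_lt_self hlam hq (by linarith [hy.2])).trans
      (hexp₁.self_lt_apply hlam hp (by linarith [hy.1]))
  have hle₁ : ∀ u v, v ≤ T₁ → μ (Ioo u v) ≤ μ (Ioo (e₁ u) (e₁ v)) := fun u v hv =>
    measure_Ioo_le_of_map_restrict_le (map_restrict_Iic_le hm₁ hm₂ hφ₁)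
      fun _ hy => hy.2.le.trans hv
  have hle₂ : ∀ u v, T₂ ≤ u → μ (Ioo u v) ≤ μ (Ioo (e₂ u) (e₂ v)) := fun u v hu =>
    measure_Ioo_le_of_map_restrict_le (map_restrict_Ioi_le hm₁ hm₂ hφ₂)
      fun _ hy => hu.trans_lt hy.1
  intro hμ
  rcases le_or_gt b p with hbp | hpb
  · refine (hμ a ((a + b) / 2) le_rfl (by linarith) (by linarith)).ne' ?_
    exact measure_Ioo_eq_zero_of_lt_fixedPt hlam hexp₁ hp
      (fun u v hv => hle₁ u v (hv.trans hpT.le)) (by linarith)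
  rcases le_or_gt q a with hqa | haq
  · refine (hμ ((a + b) / 2) b (by linarith) (by linarith) le_rfl).ne' ?_
    exact measure_Ioo_eq_zero_of_fixedPt_lt hlam hexp₂ hq
      (fun u v hu => hle₂ u v (hTq.le.trans hu)) (by linarith)
  exact not_chargesIoo_of_measure_Ioo_eq_zero hlam hexp₁ hexp₂ hp hq hT he₁T he₂T hJ hle₁ hle₂
    (le_max_right a p) (max_lt (lt_min hab haq) (lt_min hpb (by linarith)))
    (min_le_right b q) (hμ.mono (le_max_left a p) (min_le_left b q))

lemma not_chargesIoo_of_mem_Ioo_of_lt {t₀ t₁ : ℝ} [IsFiniteMeasure μ] {e₁ e₂ : ℝ ≃o ℝ}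
    (hlam : 1 < lam) (hexp₁ : IsExpanding lam e₁) (hexp₂ : IsExpanding lam e₂) (hp0 : p < 0)
    (hq1 : 1 < q) (hp : e₁ p = p) (hq : e₂ q = q)
    (ht₀ : e₂ t₀ = 0) (ht₁ : e₁ t₁ = 1) (hT₁ : T₁ ∈ Ioo t₀ t₁) (hT₂ : T₂ ∈ Ioo t₀ t₁)
    (hT : T₁ < T₂) (hφ₁ : μ.map (coreMap e₁ e₂ T₁) = μ) (hφ₂ : μ.map (coreMap e₁ e₂ T₂) = μ)
    {a b : ℝ} (hab : a < b) : ¬ ChargesIoo μ a b := by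
  have ht₀pos : 0 < t₀ := e₂.lt_iff_lt.1 (ht₀ ▸ hexp₂.apply_lt_self hlam hq (by linarith))
  have ht₁lt : t₁ < 1 := ht₁ ▸ hexp₁.self_lt_apply hlam hp (by linarith [hT₁.1, hT₁.2])
  exact not_chargesIoo_of_map_coreMap_eq hlam hexp₁ hexp₂ hp hq (by linarith [hT₁.1]) hT
    (by linarith [hT₂.2]) ((e₁.monotone hT₁.2.le).trans (ht₁ ▸ hq1.le))
    (hp0.le.trans (ht₀ ▸ e₂.monotone hT₂.1.le)) hφ₁ hφ₂ hab

end Expansion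

theorem MeqLeb_pairwise_distinct_general
    (lam : ℝ) (hlam : 1 < lam)
    (h₁ h₂ : ℝ → ℝ)
    (h₁C : ContDiff ℝ 2 h₁) (h₂C : ContDiff ℝ 2 h₂)
    (h₁mono : StrictMono h₁) (h₂mono : StrictMono h₂)
    (h₁bij : Function.Bijective h₁) (h₂bij : Function.Bijective h₂)
    (h₁deriv : ∀ t, lam ≤ deriv h₁ t) (h₂deriv : ∀ t, lam ≤ deriv h₂ t)
    (p q : ℝ) (hp : p < 0) (hq : 1 < q)
    (hfp : h₁ p = p) (hfq : h₂ q = q)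
    (t₀ t₁ : ℝ) (ht₀ : h₂ t₀ = 0) (ht₁ : h₁ t₁ = 1)
    (T₁ T₂ : ℝ) (hT₁ : T₁ ∈ Set.Ioo t₀ t₁) (hT₂ : T₂ ∈ Set.Ioo t₀ t₁) (hne : T₁ ≠ T₂)
    (μ₁ μ₂ : Measure ℝ)
    (hμ₁ : μ₁ ∈ MeqLeb (coreMap h₁ h₂ T₁)) (hμ₂ : μ₂ ∈ MeqLeb (coreMap h₁ h₂ T₂)) :
    μ₁ ≠ μ₂ := by
  rintro rfl
  obtain ⟨hprob, herg₁, a, b, hab, -, hvol⟩ := hμ₁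
  have hexp₁ : IsExpanding lam h₁ :=
    mul_sub_le_image_sub_of_le_deriv (h₁C.differentiable (by norm_num)) h₁deriv
  have hexp₂ : IsExpanding lam h₂ :=
    mul_sub_le_image_sub_of_le_deriv (h₂C.differentiable (by norm_num)) h₂deriv
  have hφ₁ := herg₁.toMeasurePreserving.map_eq
  have hφ₂ := hμ₂.2.1.toMeasurePreserving.map_eq
  obtain ⟨e₁, rfl⟩ : ∃ e : ℝ ≃o ℝ, ⇑e = h₁ :=
    ⟨_, StrictMono.coe_orderIsoOfSurjective h₁ h₁mono h₁bij.2⟩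
  obtain ⟨e₂, rfl⟩ : ∃ e : ℝ ≃o ℝ, ⇑e = h₂ :=
    ⟨_, StrictMono.coe_orderIsoOfSurjective h₂ h₂mono h₂bij.2⟩
  have hμ := chargesIoo_of_absolutelyContinuous hvol
  rcases hne.lt_or_gt with hT | hT
  · exact not_chargesIoo_of_mem_Ioo_of_lt hlam hexp₁ hexp₂ hp hq hfp hfq ht₀ ht₁ hT₁ hT₂ hT
      hφ₁ hφ₂ hab hμ
  · exact not_chargesIoo_of_mem_Ioo_of_lt hlam hexp₁ hexp₂ hp hq hfp hfq ht₀ ht₁ hT₂ hT₁ hT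
      hφ₂ hφ₁ hab hμ

/-- **Proposition 5.18, item (2).** Under the superposition hypothesis for the expanding
maps `h₁, h₂`: for `T₁, T₂ ∈ (t₀, t₁)` with `T₁ ≠ T₂`, any measures
`μ₁ ∈ M_eqLeb(φ_{T₁})` and `μ₂ ∈ M_eqLeb(φ_{T₂})` are different. -/
theorem MeqLeb_pairwise_distinct
    (lam : ℝ) (hlam : 1 < lam)
    (h₁ h₂ : ℝ → ℝ)
    (h₁C : ContDiff ℝ 2 h₁) (h₂C : ContDiff ℝ 2 h₂)
    (h₁mono : StrictMono h₁) (h₂mono : StrictMono h₂)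
    (h₁bij : Function.Bijective h₁) (h₂bij : Function.Bijective h₂)
    (h₁deriv : ∀ t, lam ≤ deriv h₁ t) (h₂deriv : ∀ t, lam ≤ deriv h₂ t)
    (p q : ℝ) (hp : p < 0) (hq : 1 < q)
    (hfp : h₁ p = p) (hfq : h₂ q = q)
    (hsup : ∀ t ∈ Set.Icc (0 : ℝ) 1, h₁ t ∈ Set.Ioo (0 : ℝ) 1 ∨ h₂ t ∈ Set.Ioo (0 : ℝ) 1)
    (t₀ t₁ : ℝ) (ht₀ : h₂ t₀ = 0) (ht₁ : h₁ t₁ = 1)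
    (T₁ T₂ : ℝ) (hT₁ : T₁ ∈ Set.Ioo t₀ t₁) (hT₂ : T₂ ∈ Set.Ioo t₀ t₁) (hne : T₁ ≠ T₂)
    (μ₁ μ₂ : Measure ℝ)
    (hμ₁ : μ₁ ∈ MeqLeb (coreMap h₁ h₂ T₁)) (hμ₂ : μ₂ ∈ MeqLeb (coreMap h₁ h₂ T₂)) :
    μ₁ ≠ μ₂ :=
  MeqLeb_pairwise_distinct_general lam hlam h₁ h₂ h₁C h₂C h₁mono h₂mono h₁bij h₂bij h₁deriv h₂deriv
    p q hp hq hfp hfq t₀ t₁ ht₀ ht₁ T₁ T₂ hT₁ hT₂ hne μ₁ μ₂ hμ₁ hμ₂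
end

section
/- There exists ε₀ > 0 such that for every ε ∈ (0, ε₀] there exists T₀ > 0 with the following property: for every T ≥ T₀ the map Φ_T preserves the cone field C^{uu}_ε, i.e., for every p ∈ ℝ³ the derivative DΦ_T(p) maps C^{uu}_ε(p) into C^{uu}_ε(Φ_T(p)). -/
/-!
In the coordinates `(w, z) ∈ ℝ² × ℝ`, `DΦ_T` has the skew-product form `(u, v) ↦ (A u + v b, μ̂ v)`,
where `A = D_w ψ_s` with `s = z / T` and `b = ∂_s ψ_s / T` inside the transition zone `|z| < T`,
and `A = ½ id`, `b = 0` wherever `|z| > T (1 - δ)`, since `ψ_s = ½ id` for `s` within `δ` of `±1`.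
For `‖u‖ ≤ ε |v|` the first component has norm at most `(λ ε + C / T) |v|`, and this is at most
`ε μ̂ |v|` once `T ≥ C / (ε (μ̂ - λ))`, which is possible because `μ̂ > λ² > λ`.
-/

/-- The map `Φ_T : ℝ³ → ℝ³` (with `ℝ³ = ℝ² × ℝ`):
`Φ_T(w, z) = (ψ_{z/T}(w), μ̂ z)` if `|z| ≤ T` and `Φ_T(w, z) = (w/2, μ̂ z)` if `|z| ≥ T`. -/
noncomputable def PhiT (ψ : ℝ → ℝ × ℝ → ℝ × ℝ) (muh T : ℝ) (v : (ℝ × ℝ) × ℝ) :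
    (ℝ × ℝ) × ℝ :=
  if |v.2| ≤ T then (ψ (v.2 / T) v.1, muh * v.2) else ((2 : ℝ)⁻¹ • v.1, muh * v.2)

/-- The strong unstable cone `C^{uu}_ε = {(u, v) ∈ ℝ² × ℝ : ‖u‖ ≤ ε |v|}` (at every base
point, identifying all tangent spaces of `ℝ³` with `ℝ³`). -/
def strongUnstableCone (ε : ℝ) : Set ((ℝ × ℝ) × ℝ) :=
  {u | ‖u.1‖ ≤ ε * |u.2|}

open Filter Set Topology ContinuousLinearMap

section SkewProduct

variable {E F : Type*} [NormedAddCommGroup E] [NormedSpace ℝ E]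
  [NormedAddCommGroup F] [NormedSpace ℝ F]

/-- The shape of the derivative of a skew product `(w, z) ↦ (g_z(w), μ z)`. -/
noncomputable def skewProductDeriv (A : E →L[ℝ] F) (b : F) (μ : ℝ) : E × ℝ →L[ℝ] F × ℝ :=
  (A.comp (fst ℝ E ℝ) + (snd ℝ E ℝ).smulRight b).prod (μ • snd ℝ E ℝ)

@[simp]
theorem skewProductDeriv_apply (A : E →L[ℝ] F) (b : F) (μ : ℝ) (u : E × ℝ) :
    skewProductDeriv A b μ u = (A u.1 + u.2 • b, μ * u.2) :=
  rfl

theorem skewProductDeriv_mapsTo_cone {A : E →L[ℝ] F} {b : F} {lam μ ε : ℝ} (hlam : 0 ≤ lam)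
    (hμ : 0 ≤ μ) (hA : ‖A‖ ≤ lam) (hb : ‖b‖ ≤ (μ - lam) * ε) :
    MapsTo (skewProductDeriv A b μ) {u | ‖u.1‖ ≤ ε * |u.2|} {v | ‖v.1‖ ≤ ε * |v.2|} := by
  rintro ⟨w, t⟩ (hu : ‖w‖ ≤ ε * |t|)
  show ‖A w + t • b‖ ≤ ε * |μ * t|
  calc ‖A w + t • b‖ ≤ ‖A‖ * ‖w‖ + |t| * ‖b‖ := by
        grw [norm_add_le, norm_smul, A.le_opNorm, Real.norm_eq_abs]
    _ ≤ lam * (ε * |t|) + |t| * ((μ - lam) * ε) := by gcongr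
    _ = ε * |μ * t| := by rw [abs_mul, abs_of_nonneg hμ]; ring

theorem HasFDerivAt.hasFDerivAt_comp_prodMk_right {f : ℝ × E → F} {D : ℝ × E →L[ℝ] F}
    {s : ℝ} {w : E} (hf : HasFDerivAt f D (s, w)) :
    HasFDerivAt (fun w' => f (s, w')) (D.comp (inr ℝ ℝ E)) w :=
  hf.comp w (hasFDerivAt_prodMk_right s w)

theorem HasFDerivAt.hasDerivAt_comp_prodMk_left {f : ℝ × E → F} {D : ℝ × E →L[ℝ] F}
    {s : ℝ} {w : E} (hf : HasFDerivAt f D (s, w)) :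
    HasDerivAt (fun s' => f (s', w)) (D (1, 0)) s := by
  have h := (hf.comp s (hasFDerivAt_prodMk_left s w)).hasDerivAt
  rwa [comp_apply, inl_apply] at h

theorem hasFDerivAt_skewProduct {g : ℝ × E → F} {D : ℝ × E →L[ℝ] F} (μ T : ℝ) {w : E} {z : ℝ}
    (hg : HasFDerivAt g D (z / T, w)) :
    HasFDerivAt (fun q : E × ℝ => (g (q.2 / T, q.1), μ * q.2))
      (skewProductDeriv (D.comp (inr ℝ ℝ E)) (T⁻¹ • D (1, 0)) μ) (w, z) := by
  have hscale : HasFDerivAt (fun q : E × ℝ => (q.2 / T, q.1))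
      ((T⁻¹ • snd ℝ E ℝ).prod (fst ℝ E ℝ)) (w, z) := by
    simpa only [div_eq_mul_inv] using
      (hasFDerivAt_snd.mul_const T⁻¹).prodMk (hasFDerivAt_fst (p := (w, z)))
  refine ((hg.comp (w, z) hscale).prodMk (hasFDerivAt_snd.const_mul μ)).congr_fderiv ?_
  ext u <;> simp [← map_smul, Prod.mk_zero_zero]

end SkewProduct

section PhiT

variable {ψ : ℝ → ℝ × ℝ → ℝ × ℝ} {muh T : ℝ} {p : (ℝ × ℝ) × ℝ}

theorem PhiT_eventuallyEq_of_abs_lt (hp : |p.2| < T) :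
    PhiT ψ muh T =ᶠ[𝓝 p] fun q => (ψ (q.2 / T) q.1, muh * q.2) := by
  filter_upwards [(isOpen_lt (continuous_abs.comp continuous_snd) continuous_const).mem_nhds hp]
    with q (hq : |q.2| < T)
  exact if_pos hq.le

theorem PhiT_eventuallyEq_of_lt_abs {δ : ℝ} (hT : 0 < T)
    (hend : ∀ s ∈ Icc (-1 : ℝ) 1, (s < -1 + δ ∨ 1 - δ < s) → ∀ w, ψ s w = (2 : ℝ)⁻¹ • w)
    (hp : T * (1 - δ) < |p.2|) :
    PhiT ψ muh T =ᶠ[𝓝 p] fun q => ((2 : ℝ)⁻¹ • q.1, muh * q.2) := by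
  filter_upwards [(isOpen_lt continuous_const (continuous_abs.comp continuous_snd)).mem_nhds hp]
    with q (hq : T * (1 - δ) < |q.2|)
  unfold PhiT
  split_ifs with hqT
  · have hs : q.2 / T ∈ Icc (-1 : ℝ) 1 := by
      rw [mem_Icc, ← abs_le, abs_div, abs_of_pos hT, div_le_one hT]
      exact hqT
    have hs' : 1 - δ < |q.2 / T| := by rwa [abs_div, abs_of_pos hT, lt_div_iff₀ hT, mul_comm]
    rw [hend _ hs ((lt_abs.mp hs').symm.imp (fun h => by linarith) id)]
  · rfl

theorem PhiT_hasFDerivAt_of_abs_lt {D : ℝ × (ℝ × ℝ) →L[ℝ] ℝ × ℝ}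
    (hψ : HasFDerivAt (fun sw : ℝ × (ℝ × ℝ) => ψ sw.1 sw.2) D (p.2 / T, p.1)) (hp : |p.2| < T) :
    HasFDerivAt (PhiT ψ muh T)
      (skewProductDeriv (D.comp (inr ℝ ℝ (ℝ × ℝ))) (T⁻¹ • D (1, 0)) muh) p :=
  (hasFDerivAt_skewProduct muh T hψ).congr_of_eventuallyEq (PhiT_eventuallyEq_of_abs_lt hp)

theorem PhiT_hasFDerivAt_of_lt_abs {δ : ℝ} (hT : 0 < T)
    (hend : ∀ s ∈ Icc (-1 : ℝ) 1, (s < -1 + δ ∨ 1 - δ < s) → ∀ w, ψ s w = (2 : ℝ)⁻¹ • w)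
    (hp : T * (1 - δ) < |p.2|) :
    HasFDerivAt (PhiT ψ muh T)
      (skewProductDeriv ((2 : ℝ)⁻¹ • ContinuousLinearMap.id ℝ (ℝ × ℝ)) 0 muh) p :=
  (skewProductDeriv _ 0 muh).hasFDerivAt.congr_of_eventuallyEq <|
    (PhiT_eventuallyEq_of_lt_abs hT hend hp).trans (.of_forall fun q => by simp)

theorem PhiT_hasFDerivAt_skewProductDeriv {lam C δ : ℝ} (hlam : 2⁻¹ ≤ lam) (hT : 0 < T)
    (hψC1 : ContDiffOn ℝ 1 (fun sw : ℝ × (ℝ × ℝ) => ψ sw.1 sw.2) (Icc (-1 : ℝ) 1 ×ˢ univ))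
    (hδ : 0 < δ)
    (hend : ∀ s ∈ Icc (-1 : ℝ) 1, (s < -1 + δ ∨ 1 - δ < s) → ∀ w, ψ s w = (2 : ℝ)⁻¹ • w)
    (hfib : ∀ s ∈ Icc (-1 : ℝ) 1, ∀ w, ‖fderiv ℝ (ψ s) w‖ ≤ lam)
    (hpar : ∀ s ∈ Icc (-1 : ℝ) 1, ∀ w, ‖deriv (fun s' => ψ s' w) s‖ ≤ C) (p : (ℝ × ℝ) × ℝ) :
    ∃ (A : ℝ × ℝ →L[ℝ] ℝ × ℝ) (b : ℝ × ℝ), ‖A‖ ≤ lam ∧ ‖b‖ ≤ C / T ∧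
      HasFDerivAt (PhiT ψ muh T) (skewProductDeriv A b muh) p := by
  rcases lt_or_ge |p.2| T with hp | hp
  · have hs : p.2 / T ∈ Ioo (-1 : ℝ) 1 := by
      rw [mem_Ioo, ← abs_lt, abs_div, abs_of_pos hT, div_lt_one hT]
      exact hp
    have hD := ((hψC1.differentiableOn one_ne_zero).differentiableAt
      (prod_mem_nhds (Icc_mem_nhds hs.1 hs.2) (univ_mem (f := 𝓝 p.1)))).hasFDerivAt
    refine ⟨_, _, ?_, ?_, PhiT_hasFDerivAt_of_abs_lt hD hp⟩
    · rw [← hD.hasFDerivAt_comp_prodMk_right.fderiv]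
      exact hfib _ (Ioo_subset_Icc_self hs) _
    · rw [norm_smul, ← hD.hasDerivAt_comp_prodMk_left.deriv, norm_inv, Real.norm_of_nonneg hT.le,
        inv_mul_eq_div]
      gcongr
      exact hpar _ (Ioo_subset_Icc_self hs) _
  · have hC : 0 ≤ C := (norm_nonneg _).trans (hpar 0 ⟨by norm_num, by norm_num⟩ 0)
    refine ⟨_, 0, ?_, by simpa using div_nonneg hC hT.le,
      PhiT_hasFDerivAt_of_lt_abs hT hend (by nlinarith)⟩
    calc ‖(2 : ℝ)⁻¹ • ContinuousLinearMap.id ℝ (ℝ × ℝ)‖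
        ≤ ‖(2 : ℝ)⁻¹‖ * ‖ContinuousLinearMap.id ℝ (ℝ × ℝ)‖ := opNorm_smul_le _ _
      _ ≤ 2⁻¹ * 1 := by gcongr <;> norm_num [norm_id_le]
      _ ≤ lam := by linarith

end PhiT

/-- **Lemma 4.13.** Let `1 < λ` and `μ̂ > λ²`, and let `ψ : [-1,1] × ℝ² → ℝ²` be a `C¹`
family with `ψ_s(w) = w/2` for `s` near `±1`, fiber derivatives of norm at most `λ`, and
uniformly bounded `s`-derivative. Then there is `ε₀ > 0` such that for every
`ε ∈ (0, ε₀]` there is `T₀ > 0` such that for every `T ≥ T₀` the map `Φ_T` is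
differentiable and its derivative maps the cone `C^{uu}_ε` into itself at every point. -/
theorem PhiT_preserves_cone_field
    (lam muh : ℝ) (hlam : 1 < lam) (hmuh : lam ^ 2 < muh)
    (ψ : ℝ → ℝ × ℝ → ℝ × ℝ)
    (hψC1 : ContDiffOn ℝ 1 (fun sw : ℝ × (ℝ × ℝ) => ψ sw.1 sw.2)
      (Set.Icc (-1 : ℝ) 1 ×ˢ Set.univ))
    (hψend : ∃ δ > (0 : ℝ), ∀ s ∈ Set.Icc (-1 : ℝ) 1, (s < -1 + δ ∨ 1 - δ < s) →
      ∀ w : ℝ × ℝ, ψ s w = (2 : ℝ)⁻¹ • w)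
    (hψfib : ∀ s ∈ Set.Icc (-1 : ℝ) 1, ∀ w : ℝ × ℝ, ‖fderiv ℝ (ψ s) w‖ ≤ lam)
    (hψpar : ∃ C : ℝ, ∀ s ∈ Set.Icc (-1 : ℝ) 1, ∀ w : ℝ × ℝ,
      ‖deriv (fun s' => ψ s' w) s‖ ≤ C) :
    ∃ ε₀ > (0 : ℝ), ∀ ε : ℝ, 0 < ε → ε ≤ ε₀ →
      ∃ T₀ > (0 : ℝ), ∀ T ≥ T₀, ∀ p : (ℝ × ℝ) × ℝ,
        DifferentiableAt ℝ (PhiT ψ muh T) p ∧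
        ∀ u ∈ strongUnstableCone ε,
          fderiv ℝ (PhiT ψ muh T) p u ∈ strongUnstableCone ε := by
  obtain ⟨δ, hδ, hend⟩ := hψend
  obtain ⟨C, hC⟩ := hψpar
  have hgap : 0 < muh - lam := by nlinarith
  refine ⟨1, one_pos, fun ε hε _ => ⟨max 1 (C / (ε * (muh - lam))), by positivity,
    fun T hTT₀ p => ?_⟩⟩
  have hT : 0 < T := one_pos.trans_le ((le_max_left _ _).trans hTT₀)
  have hCT : C ≤ T * (ε * (muh - lam)) :=
    (div_le_iff₀ (by positivity)).mp ((le_max_right _ _).trans hTT₀)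
  obtain ⟨A, b, hA, hb, hΦ⟩ :=
    PhiT_hasFDerivAt_skewProductDeriv (by linarith) hT hψC1 hδ hend hψfib hC p
  refine ⟨hΦ.differentiableAt, fun u hu => hΦ.fderiv ▸ ?_⟩
  refine skewProductDeriv_mapsTo_cone (by linarith) (by nlinarith) hA ?_ hu
  calc ‖b‖ ≤ C / T := hb
    _ ≤ (muh - lam) * ε := by rw [div_le_iff₀ hT]; linarith
end
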